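/- arXiv:1509.09020 — 3 statements merged into one kernel-verified Lean document; each statement's English description precedes it below -/
import Mathlib

section
/- Let n ≥ 1 and let h : ℝⁿ → (0,∞)ⁿ be smooth scale factors of an orthogonal coordinate system, and suppose fᵢ : ℝ → ℝ are smooth. Define Φ(q) = Σᵢ fᵢ(qⁱ)/hᵢ(q)². If the Stäckel condition 𝒟_{jk}(hᵢ⁻²) = 0 holds for all i and all j ≠ k, then 𝒟_{jk}(Φ) = 0 for all j ≠ k, where 𝒟_{jk}(f) = ∂ⱼ∂ₖf + (∂ⱼ ln hₖ²)(∂ₖf) + (∂ₖ ln hⱼ²)(∂ⱼf). -/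
/-- Partial derivative in the `j`-th coordinate direction. -/
noncomputable def pd {n : ℕ} (j : Fin n) (f : (Fin n → ℝ) → ℝ) (q : Fin n → ℝ) : ℝ :=
  fderiv ℝ f q (Pi.single j 1)

/-- The Stäckel differential operator `𝒟_{jk}` associated to scale factors `h`. -/
noncomputable def Dst {n : ℕ} (h : Fin n → (Fin n → ℝ) → ℝ) (j k : Fin n)
    (f : (Fin n → ℝ) → ℝ) (q : Fin n → ℝ) : ℝ :=
  pd j (fun q' => pd k f q') q
    + pd j (fun q' => Real.log ((h k q') ^ 2)) q * pd k f q
    + pd k (fun q' => Real.log ((h j q') ^ 2)) q * pd j f q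


lemma pd_add {n : ℕ} (j : Fin n) {u v : (Fin n → ℝ) → ℝ} {q : Fin n → ℝ}
    (hu : DifferentiableAt ℝ u q) (hv : DifferentiableAt ℝ v q) :
    pd j (fun q' => u q' + v q') q = pd j u q + pd j v q := by
  unfold pd; rw [fderiv_fun_add hu hv]; simp

lemma pd_sum {n : ℕ} (j : Fin n) (F : Fin n → (Fin n → ℝ) → ℝ) (q : Fin n → ℝ)
    (hF : ∀ i, DifferentiableAt ℝ (F i) q) :
    pd j (fun q' => ∑ i, F i q') q = ∑ i, pd j (F i) q := by
  unfold pd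
  rw [fderiv_fun_sum (fun i _ => hF i)]
  simp

lemma pd_mul {n : ℕ} (j : Fin n) {u v : (Fin n → ℝ) → ℝ} {q : Fin n → ℝ}
    (hu : DifferentiableAt ℝ u q) (hv : DifferentiableAt ℝ v q) :
    pd j (fun q' => u q' * v q') q = u q * pd j v q + pd j u q * v q := by
  unfold pd; rw [fderiv_fun_mul hu hv]; simp; ring

lemma pd_single {n : ℕ} (i j : Fin n) {f : ℝ → ℝ} (q : Fin n → ℝ)
    (hf : DifferentiableAt ℝ f (q i)) :
    pd j (fun q' => f (q' i)) q = if i = j then deriv f (q i) else 0 := by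
  have h1 : HasFDerivAt (fun q' : Fin n → ℝ => q' i)
      (ContinuousLinearMap.proj (R := ℝ) (φ := fun _ : Fin n => ℝ) i) q := by
    exact (ContinuousLinearMap.proj (R := ℝ) (φ := fun _ : Fin n => ℝ) i).hasFDerivAt
  have h2 := hf.hasDerivAt.comp_hasFDerivAt q h1
  unfold pd
  rw [show (fun q' : Fin n → ℝ => f (q' i)) = f ∘ (fun q' => q' i) from rfl, h2.fderiv]
  simp [Pi.single_apply]

lemma pd_log {n : ℕ} (j : Fin n) {P : (Fin n → ℝ) → ℝ} {q : Fin n → ℝ}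
    (hP : DifferentiableAt ℝ P q) (hne : P q ≠ 0) :
    pd j (fun q' => Real.log (P q')) q = pd j P q / P q := by
  have h2 := (Real.hasDerivAt_log hne).comp_hasFDerivAt q hP.hasFDerivAt
  unfold pd
  rw [show (fun q' => Real.log (P q')) = Real.log ∘ P from rfl, h2.fderiv]
  simp [div_eq_inv_mul]

lemma pd_inv {n : ℕ} (j : Fin n) {P : (Fin n → ℝ) → ℝ} {q : Fin n → ℝ}
    (hP : DifferentiableAt ℝ P q) (hne : P q ≠ 0) :
    pd j (fun q' => (P q')⁻¹) q = -pd j P q / (P q) ^ 2 := by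
  have h2 := (hasDerivAt_inv hne).comp_hasFDerivAt q hP.hasFDerivAt
  unfold pd
  rw [show (fun q' => (P q')⁻¹) = (fun y => y⁻¹) ∘ P from rfl, h2.fderiv]
  simp
  field_simp

lemma contDiff_pd {n : ℕ} (j : Fin n) {f : (Fin n → ℝ) → ℝ}
    (hf : ContDiff ℝ (⊤ : ℕ∞) f) : ContDiff ℝ (⊤ : ℕ∞) (fun q => pd j f q) := by
  unfold pd
  exact (ContinuousLinearMap.apply ℝ ℝ (Pi.single j (1:ℝ))).contDiff.comp
    (hf.fderiv_right (m := ((⊤ : ℕ∞) : WithTop ℕ∞)) (by exact_mod_cast (le_top : ((⊤ : ℕ∞) + 1 : ℕ∞) ≤ ⊤)))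

lemma Dst_term_zero {n : ℕ} (h : Fin n → (Fin n → ℝ) → ℝ)
    (hpos : ∀ i q, 0 < h i q) (hsm : ∀ i, ContDiff ℝ (⊤ : ℕ∞) (h i))
    (fi : ℝ → ℝ) (hfi : ContDiff ℝ (⊤ : ℕ∞) fi) (i j k : Fin n) (hjk : j ≠ k)
    (hstk : ∀ q, Dst h j k (fun q' => ((h i q') ^ 2)⁻¹) q = 0) (q : Fin n → ℝ) :
    Dst h j k (fun q' => fi (q' i) * ((h i q') ^ 2)⁻¹) q = 0 := by
  have hD : ∀ {F : (Fin n → ℝ) → ℝ}, ContDiff ℝ (⊤ : ℕ∞) F → ∀ x, DifferentiableAt ℝ F x :=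
    fun hF x => (hF.differentiable (by simp)).differentiableAt
  set u : (Fin n → ℝ) → ℝ := fun q' => fi (q' i) with hu_def
  set g : (Fin n → ℝ) → ℝ := fun q' => ((h i q') ^ 2)⁻¹ with hg_def
  have hP : ContDiff ℝ (⊤ : ℕ∞) (fun q' => (h i q') ^ 2) := (hsm i).pow 2
  have hPne : ∀ x, (h i x) ^ 2 ≠ 0 := fun x => pow_ne_zero 2 (hpos i x).ne'
  have hg : ContDiff ℝ (⊤ : ℕ∞) g := hP.inv hPne
  have hu : ContDiff ℝ (⊤ : ℕ∞) u := by
    exact hfi.comp (ContinuousLinearMap.proj (R := ℝ) (φ := fun _ : Fin n => ℝ) i).contDiff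
  have hfi' : Differentiable ℝ (deriv fi) :=
    ((contDiff_infty_iff_deriv.mp (hfi.of_le (by simp))).2).differentiable (by simp)
  have hdfc : Differentiable ℝ (fun q' : Fin n → ℝ => deriv fi (q' i)) := by
    exact hfi'.comp ((ContinuousLinearMap.proj (R := ℝ) (φ := fun _ : Fin n => ℝ) i).differentiable)
  -- the cancellation identity
  have hcancel : ∀ (m : Fin n) (x : Fin n → ℝ),
      pd m g x + pd m (fun q'' => Real.log ((h i q'') ^ 2)) x * g x = 0 := by
    intro m x
    rw [hg_def]
    rw [pd_inv m (hD hP x) (hPne x), pd_log m (hD hP x) (hPne x)]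
    field_simp
    ring
  have pdu : ∀ (m : Fin n) (x : Fin n → ℝ),
      pd m u x = if i = m then deriv fi (x i) else 0 := fun m x =>
    pd_single i m x (hfi.differentiable (by simp) _)
  have hmul : ∀ (m : Fin n) (x : Fin n → ℝ),
      pd m (fun q' => u q' * g q') x = u x * pd m g x + pd m u x * g x := fun m x =>
    pd_mul m (hD hu x) (hD hg x)
  -- the Stäckel condition for g, unfolded
  have hstkg := hstk q
  rw [Dst] at hstkg
  rw [Dst]
  rcases eq_or_ne i j with rfl | hij
  · -- i = j, so i ≠ k
    have hik : i ≠ k := hjk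
    have e1 : (fun q' => pd k (fun x => u x * g x) q') = fun q' => u q' * pd k g q' := by
      funext x
      rw [hmul, pdu, if_neg hik]; ring
    rw [e1, pd_mul i (hD hu q) (hD (contDiff_pd k hg) q), hmul, hmul, pdu, pdu,
        if_pos rfl, if_neg hik]
    linear_combination u q * hstkg + deriv fi (q i) * hcancel k q
  rcases eq_or_ne i k with rfl | hik
  · -- i = k, i ≠ j
    have e1 : (fun q' => pd i (fun x => u x * g x) q') =
        fun q' => u q' * pd i g q' + (deriv fi) (q' i) * g q' := by
      funext x
      rw [hmul, pdu, if_pos rfl]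
    rw [e1]
    rw [pd_add j (u := fun q' => u q' * pd i g q') (v := fun q' => deriv fi (q' i) * g q') (by exact hD (hu.mul (contDiff_pd i hg)) q)
          ((hdfc.mul (hg.differentiable (by simp))).differentiableAt)]
    rw [pd_mul j (hD hu q) (hD (contDiff_pd i hg) q),
        pd_mul j hdfc.differentiableAt (hD hg q),
        pd_single i j q (hfi' _), if_neg hij,
        hmul, hmul, pdu, pdu, if_pos rfl, if_neg hij]
    linear_combination u q * hstkg + deriv fi (q i) * hcancel j q
  · -- i ∉ {j, k}
    have e1 : (fun q' => pd k (fun x => u x * g x) q') = fun q' => u q' * pd k g q' := by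
      funext x
      rw [hmul, pdu, if_neg hik]; ring
    rw [e1, pd_mul j (hD hu q) (hD (contDiff_pd k hg) q), hmul, hmul, pdu, pdu,
        if_neg hik, if_neg hij]
    linear_combination u q * hstkg

/-- If the Stäckel coordinate condition `𝒟_{jk}(hᵢ⁻²) = 0` holds, then
`Φ(q) = Σᵢ fᵢ(qⁱ)/hᵢ(q)²` satisfies `𝒟_{jk}(Φ) = 0` for all `j ≠ k`. -/
theorem separable_potential_satisfies_staeckel {n : ℕ} (hn : 1 ≤ n)
    (h : Fin n → (Fin n → ℝ) → ℝ)
    (hpos : ∀ i q, 0 < h i q) (hsm : ∀ i, ContDiff ℝ (⊤ : ℕ∞) (h i))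
    (f : Fin n → ℝ → ℝ) (hf : ∀ i, ContDiff ℝ (⊤ : ℕ∞) (f i))
    (Φ : (Fin n → ℝ) → ℝ)
    (hΦ : ∀ q, Φ q = ∑ i, f i (q i) / (h i q) ^ 2)
    (hstk : ∀ (i j k : Fin n), j ≠ k →
      ∀ q, Dst h j k (fun q' => ((h i q') ^ 2)⁻¹) q = 0) :
    ∀ (j k : Fin n), j ≠ k → ∀ q, Dst h j k Φ q = 0 := by
  intro j k hjk q
  have hD : ∀ {F : (Fin n → ℝ) → ℝ}, ContDiff ℝ (⊤ : ℕ∞) F → ∀ x, DifferentiableAt ℝ F x :=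
    fun hF x => (hF.differentiable (by simp)).differentiableAt
  set F : Fin n → (Fin n → ℝ) → ℝ := fun i q' => f i (q' i) * ((h i q') ^ 2)⁻¹ with hF_def
  have hFsm : ∀ i, ContDiff ℝ (⊤ : ℕ∞) (F i) := by
    intro i
    exact ((hf i).comp
        (ContinuousLinearMap.proj (R := ℝ) (φ := fun _ : Fin n => ℝ) i).contDiff).mul
      (((hsm i).pow 2).inv fun x => pow_ne_zero 2 (hpos i x).ne')
  have hΦeq : Φ = fun q' => ∑ i, F i q' := by
    funext x
    rw [hΦ]
    simp [hF_def, div_eq_mul_inv]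
  rw [hΦeq, Dst]
  have e2 : (fun q' => pd k (fun x => ∑ i, F i x) q') = fun q' => ∑ i, pd k (F i) q' :=
    funext fun x => pd_sum k F x (fun i => hD (hFsm i) x)
  rw [e2, pd_sum j (fun i q' => pd k (F i) q') q (fun i => hD (contDiff_pd k (hFsm i)) q),
      pd_sum k F q (fun i => hD (hFsm i) q), pd_sum j F q (fun i => hD (hFsm i) q),
      Finset.mul_sum, Finset.mul_sum, ← Finset.sum_add_distrib, ← Finset.sum_add_distrib]
  apply Finset.sum_eq_zero
  intro i _
  have key := Dst_term_zero h hpos hsm (f i) (hf i) i j k hjk (hstk i j k hjk) q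
  rw [Dst] at key
  exact key
end

section
/- Suppose in an orthogonal coordinate system with smooth positive scale factors hᵢ and smooth positive density ρ, the second and fourth moment functions ⟨vᵢ²⟩, ⟨vᵢ⁴⟩, ⟨vᵢ²vⱼ²⟩ (smooth) satisfy for all j the second-order Jeans equation ∂(ρ⟨vⱼ²⟩)/∂qʲ + ρ⟨vⱼ²⟩ ∂ln h/∂qʲ − Σᵢ ρ⟨vᵢ²⟩ ∂ln hᵢ/∂qʲ + ρ ∂Φ/∂qʲ = 0, the diagonal fourth-order equation ∂(ρ⟨vⱼ⁴⟩)/∂qʲ + ρ⟨vⱼ⁴⟩ ∂ln(h hⱼ²)/∂qʲ − Σᵢ ρ⟨vᵢ²vⱼ²⟩ ∂ln hᵢ³/∂qʲ + 3ρ⟨vⱼ²⟩ ∂Φ/∂qʲ = 0, and for j ≠ k the mixed fourth-order equation ∂(ρ⟨vⱼ²vₖ²⟩)/∂qʲ + ρ⟨vⱼ²vₖ²⟩ ∂ln(h hₖ²)/∂qʲ − Σᵢ ρ⟨vᵢ²vₖ²⟩ ∂ln hᵢ/∂qʲ + ρ⟨vₖ²⟩ ∂Φ/∂qʲ = 0,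 where h = Πᵢ hᵢ. Then for all j ≠ k: (⟨vⱼ⁴⟩ − 3⟨vⱼ²vₖ²⟩) hⱼ² 𝒟_{jk}(hⱼ⁻²) − (⟨vₖ⁴⟩ − 3⟨vⱼ²vₖ²⟩) hₖ² 𝒟_{jk}(hₖ⁻²) + Σ_{i≠j,k} (⟨vᵢ²vⱼ²⟩ − ⟨vᵢ²vₖ²⟩) hᵢ² 𝒟_{jk}(hᵢ⁻²) + 2(⟨vⱼ²⟩ − ⟨vₖ²⟩) 𝒟_{jk}(Φ) = 0. -/
namespace JeansAux

variable {n : ℕ} {U : Set (Fin n → ℝ)} {q : Fin n → ℝ} {f g : (Fin n → ℝ) → ℝ} {a b : Fin n}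

lemma pd_congr (hU : IsOpen U) (hq : q ∈ U) (hfg : ∀ x ∈ U, f x = g x) :
    pd a f q = pd a g q := by
  unfold pd
  rw [Filter.EventuallyEq.fderiv_eq (Filter.eventuallyEq_of_mem (hU.mem_nhds hq) hfg)]

lemma pd_zero (hU : IsOpen U) (hq : q ∈ U) (h0 : ∀ x ∈ U, f x = 0) : pd a f q = 0 := by
  rw [pd_congr hU hq (g := fun _ => (0:ℝ)) h0]
  unfold pd
  simp

lemma pd_add (hf : DifferentiableAt ℝ f q) (hg : DifferentiableAt ℝ g q) :
    pd a (fun x => f x + g x) q = pd a f q + pd a g q := by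
  unfold pd
  rw [fderiv_fun_add hf hg]
  simp

lemma pd_sub (hf : DifferentiableAt ℝ f q) (hg : DifferentiableAt ℝ g q) :
    pd a (fun x => f x - g x) q = pd a f q - pd a g q := by
  unfold pd
  rw [fderiv_fun_sub hf hg]
  simp

lemma pd_mul (hf : DifferentiableAt ℝ f q) (hg : DifferentiableAt ℝ g q) :
    pd a (fun x => f x * g x) q = pd a f q * g q + f q * pd a g q := by
  unfold pd
  rw [fderiv_fun_mul hf hg]
  simp
  ring

lemma pd_const_mul (c : ℝ) (hf : DifferentiableAt ℝ f q) :
    pd a (fun x => c * f x) q = c * pd a f q := by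
  unfold pd
  rw [fderiv_const_mul hf]
  simp

lemma pd_sum {ι : Type*} (s : Finset ι) (A : ι → (Fin n → ℝ) → ℝ)
    (hA : ∀ i ∈ s, DifferentiableAt ℝ (A i) q) :
    pd a (fun x => ∑ i ∈ s, A i x) q = ∑ i ∈ s, pd a (A i) q := by
  unfold pd
  rw [fderiv_fun_sum hA]
  simp

lemma pd_log (hf : DifferentiableAt ℝ f q) (hne : f q ≠ 0) :
    pd a (fun x => Real.log (f x)) q = (f q)⁻¹ * pd a f q := by
  unfold pd
  rw [(hf.hasFDerivAt.log hne).fderiv]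
  simp

lemma diffAt (hU : IsOpen U) (hq : q ∈ U) (hf : ContDiffOn ℝ (⊤ : ℕ∞) f U) :
    DifferentiableAt ℝ f q :=
  (hf.contDiffAt (hU.mem_nhds hq)).differentiableAt (by simp)

lemma contDiffOn_pd (hU : IsOpen U) (hf : ContDiffOn ℝ (⊤ : ℕ∞) f U) :
    ContDiffOn ℝ (⊤ : ℕ∞) (fun x => pd a f x) U := by
  have h1 : ContDiffOn ℝ (⊤ : ℕ∞) (fderiv ℝ f) U := hf.fderiv_of_isOpen hU (by simp)
  exact h1.clm_apply contDiffOn_const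

lemma pd_comm (hU : IsOpen U) (hq : q ∈ U) (hf : ContDiffOn ℝ (⊤ : ℕ∞) f U) :
    pd a (fun x => pd b f x) q = pd b (fun x => pd a f x) q := by
  have hAt : ContDiffAt ℝ (⊤ : ℕ∞) f q := hf.contDiffAt (hU.mem_nhds hq)
  have hdf : DifferentiableAt ℝ (fderiv ℝ f) q :=
    (((hf.fderiv_of_isOpen hU (m := (⊤ : ℕ∞)) (by simp)).contDiffAt (hU.mem_nhds hq)).differentiableAt (by simp))
  have key : ∀ c d : Fin n, pd c (fun x => pd d f x) q =
      fderiv ℝ (fderiv ℝ f) q (Pi.single c 1) (Pi.single d 1) := by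
    intro c d
    show fderiv ℝ (fun x => (fderiv ℝ f x) (Pi.single d 1)) q (Pi.single c 1) = _
    rw [fderiv_clm_apply hdf (differentiableAt_const _)]
    simp
  rw [key, key, (hAt.isSymmSndFDerivAt (by simp only [minSmoothness_of_isRCLikeNormedField]; exact WithTop.coe_le_coe.2 le_top)).eq]

lemma pd_mul3 {t : (Fin n → ℝ) → ℝ} (hf : DifferentiableAt ℝ f q)
    (hg : DifferentiableAt ℝ g q) (ht : DifferentiableAt ℝ t q) :
    pd a (fun x => f x * g x * t x) q
      = pd a f q * g q * t q + f q * pd a g q * t q + f q * g q * pd a t q := by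
  rw [pd_mul (f := fun x => f x * g x) (hf.mul hg) ht, pd_mul hf hg]
  ring

lemma pd_comb5 {t1 t2 t3 t4 t5 : (Fin n → ℝ) → ℝ}
    (d1 : DifferentiableAt ℝ t1 q) (d2 : DifferentiableAt ℝ t2 q)
    (d3 : DifferentiableAt ℝ t3 q) (d4 : DifferentiableAt ℝ t4 q)
    (d5 : DifferentiableAt ℝ t5 q) :
    pd a (fun x => t1 x + t2 x + t3 x - t4 x + t5 x) q
      = pd a t1 q + pd a t2 q + pd a t3 q - pd a t4 q + pd a t5 q := by
  have e1 : pd a (fun x => (fun x => t1 x + t2 x + t3 x - t4 x) x + t5 x) q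
      = pd a (fun x => t1 x + t2 x + t3 x - t4 x) q + pd a t5 q :=
    pd_add (((d1.add d2).add d3).sub d4) d5
  have e2 : pd a (fun x => (fun x => t1 x + t2 x + t3 x) x - t4 x) q
      = pd a (fun x => t1 x + t2 x + t3 x) q - pd a t4 q :=
    pd_sub ((d1.add d2).add d3) d4
  have e3 : pd a (fun x => (fun x => t1 x + t2 x) x + t3 x) q
      = pd a (fun x => t1 x + t2 x) q + pd a t3 q := pd_add (d1.add d2) d3
  have e4 : pd a (fun x => t1 x + t2 x) q = pd a t1 q + pd a t2 q := pd_add d1 d2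
  calc pd a (fun x => t1 x + t2 x + t3 x - t4 x + t5 x) q
      = pd a (fun x => t1 x + t2 x + t3 x - t4 x) q + pd a t5 q := e1
    _ = (pd a (fun x => t1 x + t2 x + t3 x) q - pd a t4 q) + pd a t5 q := by rw [e2]
    _ = (pd a (fun x => t1 x + t2 x) q + pd a t3 q - pd a t4 q) + pd a t5 q := by rw [e3]
    _ = pd a t1 q + pd a t2 q + pd a t3 q - pd a t4 q + pd a t5 q := by rw [e4]

end JeansAux
set_option maxHeartbeats 2000000

/-- from the second-order and fourth-order Jeans equations in an
orthogonal coordinate system one obtains the key identity (eq. 45):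
`(⟨vⱼ⁴⟩ − 3⟨vⱼ²vₖ²⟩) hⱼ² 𝒟_{jk}(hⱼ⁻²) − (⟨vₖ⁴⟩ − 3⟨vⱼ²vₖ²⟩) hₖ² 𝒟_{jk}(hₖ⁻²)`
`+ Σ_{i≠j,k} (⟨vᵢ²vⱼ²⟩ − ⟨vᵢ²vₖ²⟩) hᵢ² 𝒟_{jk}(hᵢ⁻²) + 2(⟨vⱼ²⟩ − ⟨vₖ²⟩) 𝒟_{jk}(Φ) = 0`. -/
theorem jeans_moment_identity {n : ℕ}
    (U : Set (Fin n → ℝ)) (hU : IsOpen U)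
    (h : Fin n → (Fin n → ℝ) → ℝ) (hpos : ∀ i q, 0 < h i q)
    (hsm : ∀ i, ContDiffOn ℝ (⊤ : ℕ∞) (h i) U)
    (ρ : (Fin n → ℝ) → ℝ) (hρpos : ∀ q, 0 < ρ q) (hρ : ContDiffOn ℝ (⊤ : ℕ∞) ρ U)
    (Φ : (Fin n → ℝ) → ℝ) (hΦ : ContDiffOn ℝ (⊤ : ℕ∞) Φ U)
    (σ2 v4 : Fin n → (Fin n → ℝ) → ℝ)
    (v22 : Fin n → Fin n → (Fin n → ℝ) → ℝ)
    (hσ2 : ∀ i, ContDiffOn ℝ (⊤ : ℕ∞) (σ2 i) U)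
    (hv4 : ∀ i, ContDiffOn ℝ (⊤ : ℕ∞) (v4 i) U)
    (hv22 : ∀ i j, ContDiffOn ℝ (⊤ : ℕ∞) (v22 i j) U)
    (hsymm : ∀ i j q, v22 i j q = v22 j i q)
    (hdiag : ∀ j q, v22 j j q = v4 j q)
    (jeans2 : ∀ (j : Fin n), ∀ q ∈ U,
      pd j (fun q' => ρ q' * σ2 j q') q
        + ρ q * σ2 j q * pd j (fun q' => Real.log (∏ i, h i q')) q
        - (∑ i, ρ q * σ2 i q * pd j (fun q' => Real.log (h i q')) q)
        + ρ q * pd j Φ q = 0)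
    (jeans4diag : ∀ (j : Fin n), ∀ q ∈ U,
      pd j (fun q' => ρ q' * v4 j q') q
        + ρ q * v4 j q *
          pd j (fun q' => Real.log ((∏ i, h i q') * (h j q') ^ 2)) q
        - (∑ i, ρ q * v22 i j q * pd j (fun q' => Real.log ((h i q') ^ 3)) q)
        + 3 * ρ q * σ2 j q * pd j Φ q = 0)
    (jeans4mixed : ∀ (j k : Fin n), j ≠ k → ∀ q ∈ U,
      pd j (fun q' => ρ q' * v22 j k q') q
        + ρ q * v22 j k q *
          pd j (fun q' => Real.log ((∏ i, h i q') * (h k q') ^ 2)) q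
        - (∑ i, ρ q * v22 i k q * pd j (fun q' => Real.log (h i q')) q)
        + ρ q * σ2 k q * pd j Φ q = 0) :
    ∀ (j k : Fin n), j ≠ k → ∀ q ∈ U,
      (v4 j q - 3 * v22 j k q) * (h j q) ^ 2 *
          Dst h j k (fun q' => ((h j q') ^ 2)⁻¹) q
        - (v4 k q - 3 * v22 j k q) * (h k q) ^ 2 *
          Dst h j k (fun q' => ((h k q') ^ 2)⁻¹) q
        + (∑ i ∈ Finset.univ.filter (fun i => i ≠ j ∧ i ≠ k),
            (v22 i j q - v22 i k q) * (h i q) ^ 2 *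
              Dst h j k (fun q' => ((h i q') ^ 2)⁻¹) q)
        + 2 * (σ2 j q - σ2 k q) * Dst h j k Φ q = 0 := by
  intro j k hjk q hq
  have hne : ∀ (i : Fin n) (x : Fin n → ℝ), h i x ≠ 0 := fun i x => (hpos i x).ne'
  have hLC : ∀ i : Fin n, ContDiffOn ℝ (⊤ : ℕ∞) (fun x => Real.log (h i x)) U :=
    fun i => (hsm i).log (fun x _ => hne i x)
  have hws : ∀ a b : Fin n, v22 a b = v22 b a := fun a b => funext (hsymm a b)
  have hv4e : ∀ i : Fin n, v4 i = v22 i i := fun i => funext fun x => (hdiag i x).symm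
  -- differentiability helpers
  have hpdC : ∀ {f : (Fin n → ℝ) → ℝ} (a : Fin n), ContDiffOn ℝ (⊤ : ℕ∞) f U →
      ContDiffOn ℝ (⊤ : ℕ∞) (fun x => pd a f x) U := fun _ hf => JeansAux.contDiffOn_pd hU hf
  have DA : ∀ {f : (Fin n → ℝ) → ℝ} {x : Fin n → ℝ}, x ∈ U → ContDiffOn ℝ (⊤ : ℕ∞) f U →
      DifferentiableAt ℝ f x := fun hx hf => JeansAux.diffAt hU hx hf
  -- log expansion lemmas
  have hlogP : ∀ (a : Fin n) (x : Fin n → ℝ), x ∈ U →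
      pd a (fun y => Real.log (∏ i, h i y)) x
        = ∑ i, pd a (fun y => Real.log (h i y)) x := by
    intro a x hx
    have hfe : (fun y => Real.log (∏ i, h i y)) = fun y => ∑ i, Real.log (h i y) := by
      funext y
      exact Real.log_prod (fun i _ => hne i y)
    rw [hfe]
    exact JeansAux.pd_sum _ _ (fun i _ => DA hx (hLC i))
  have hlogM : ∀ (a b : Fin n) (x : Fin n → ℝ), x ∈ U →
      pd a (fun y => Real.log ((∏ i, h i y) * (h b y) ^ 2)) x
        = (∑ i, pd a (fun y => Real.log (h i y)) x)
          + 2 * pd a (fun y => Real.log (h b y)) x := by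
    intro a b x hx
    have hfe : (fun y => Real.log ((∏ i, h i y) * (h b y) ^ 2))
        = fun y => (∑ i, Real.log (h i y)) + 2 * Real.log (h b y) := by
      funext y
      rw [Real.log_mul (Finset.prod_ne_zero_iff.2 fun i _ => hne i y)
          (pow_ne_zero 2 (hne b y)),
        Real.log_prod (fun i _ => hne i y), Real.log_pow]
      push_cast
      ring
    rw [hfe]
    have e1 : pd a (fun y => (fun y => ∑ i, Real.log (h i y)) y
          + (fun y => 2 * Real.log (h b y)) y) x
        = pd a (fun y => ∑ i, Real.log (h i y)) x
          + pd a (fun y => 2 * Real.log (h b y)) x :=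
      JeansAux.pd_add (DifferentiableAt.fun_sum fun i _ => DA hx (hLC i))
        ((DA hx (hLC b)).const_mul 2)
    rw [e1, JeansAux.pd_sum _ _ (fun i _ => DA hx (hLC i)),
      JeansAux.pd_const_mul 2 (DA hx (hLC b))]
  have hlog3 : ∀ (a c : Fin n) (x : Fin n → ℝ), x ∈ U →
      pd a (fun y => Real.log ((h c y) ^ 3)) x
        = 3 * pd a (fun y => Real.log (h c y)) x := by
    intro a c x hx
    have hfe : (fun y => Real.log ((h c y) ^ 3)) = fun y => 3 * Real.log (h c y) := by
      funext y
      rw [Real.log_pow]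
      push_cast
      ring
    rw [hfe]
    exact JeansAux.pd_const_mul 3 (DA hx (hLC c))
  have hlog2 : ∀ (a b : Fin n) (x : Fin n → ℝ), x ∈ U →
      pd a (fun y => Real.log ((h b y) ^ 2)) x
        = 2 * pd a (fun y => Real.log (h b y)) x := by
    intro a b x hx
    have hfe : (fun y => Real.log ((h b y) ^ 2)) = fun y => 2 * Real.log (h b y) := by
      funext y
      rw [Real.log_pow]
      push_cast
      ring
    rw [hfe]
    exact JeansAux.pd_const_mul 2 (DA hx (hLC b))
  -- canonical form of the mixed fourth-order equation, valid on U
  have mixedv : ∀ (a b : Fin n), a ≠ b → ∀ x ∈ U,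
      pd a ρ x * v22 a b x + ρ x * pd a (v22 a b) x
        + ρ x * v22 a b x * ((∑ i, pd a (fun y => Real.log (h i y)) x)
            + 2 * pd a (fun y => Real.log (h b y)) x)
        - ρ x * (∑ i, v22 i b x * pd a (fun y => Real.log (h i y)) x)
        + ρ x * σ2 b x * pd a Φ x = 0 := by
    intro a b hab x hx
    have e := jeans4mixed a b hab x hx
    rw [JeansAux.pd_mul (DA hx hρ) (DA hx (hv22 a b)), hlogM a b x hx] at e
    have hs : (∑ i, ρ x * v22 i b x * pd a (fun y => Real.log (h i y)) x)
        = ρ x * ∑ i, v22 i b x * pd a (fun y => Real.log (h i y)) x := by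
      rw [Finset.mul_sum]
      exact Finset.sum_congr rfl fun i _ => by ring
    rw [hs] at e
    linear_combination e
  -- canonical form of the diagonal fourth-order equation, valid on U
  have diagv : ∀ (a : Fin n), ∀ x ∈ U,
      pd a ρ x * v22 a a x + ρ x * pd a (v22 a a) x
        + ρ x * v22 a a x * ((∑ i, pd a (fun y => Real.log (h i y)) x)
            + 2 * pd a (fun y => Real.log (h a y)) x)
        - 3 * (ρ x * (∑ i, v22 i a x * pd a (fun y => Real.log (h i y)) x))
        + 3 * (ρ x * σ2 a x * pd a Φ x) = 0 := by
    intro a x hx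
    have e := jeans4diag a x hx
    simp only [hv4e a] at e
    rw [JeansAux.pd_mul (DA hx hρ) (DA hx (hv22 a a)), hlogM a a x hx] at e
    have hs : (∑ i, ρ x * v22 i a x * pd a (fun y => Real.log ((h i y) ^ 3)) x)
        = 3 * (ρ x * ∑ i, v22 i a x * pd a (fun y => Real.log (h i y)) x) := by
      rw [Finset.mul_sum, Finset.mul_sum]
      refine Finset.sum_congr rfl fun i _ => ?_
      rw [hlog3 a i x hx]
      ring
    rw [hs] at e
    linear_combination e
  -- canonical form of the second-order equation, valid on U
  have e2v : ∀ (a : Fin n), ∀ x ∈ U,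
      pd a ρ x * σ2 a x + ρ x * pd a (σ2 a) x
        + ρ x * σ2 a x * (∑ i, pd a (fun y => Real.log (h i y)) x)
        - ρ x * (∑ i, σ2 i x * pd a (fun y => Real.log (h i y)) x)
        + ρ x * pd a Φ x = 0 := by
    intro a x hx
    have e := jeans2 a x hx
    rw [JeansAux.pd_mul (DA hx hρ) (DA hx (hσ2 a)), hlogP a x hx] at e
    have hs : (∑ i, ρ x * σ2 i x * pd a (fun y => Real.log (h i y)) x)
        = ρ x * ∑ i, σ2 i x * pd a (fun y => Real.log (h i y)) x := by
      rw [Finset.mul_sum]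
      exact Finset.sum_congr rfl fun i _ => by ring
    rw [hs] at e
    linear_combination e
  -- derivative in direction b of the (canonical) mixed equation with indices (a, b)
  have mdf : ∀ a b : Fin n, a ≠ b →
      pd b (fun x => pd a ρ x) q * v22 a b q + pd a ρ q * pd b (v22 a b) q
      + (pd b ρ q * pd a (v22 a b) q + ρ q * pd b (fun x => pd a (v22 a b) x) q)
      + (pd b ρ q * v22 a b q * ((∑ i, pd a (fun y => Real.log (h i y)) q)
            + 2 * pd a (fun y => Real.log (h b y)) q)
         + ρ q * pd b (v22 a b) q * ((∑ i, pd a (fun y => Real.log (h i y)) q)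
            + 2 * pd a (fun y => Real.log (h b y)) q)
         + ρ q * v22 a b q * ((∑ i, pd b (fun x => pd a (fun y => Real.log (h i y)) x) q)
            + 2 * pd b (fun x => pd a (fun y => Real.log (h b y)) x) q))
      - (pd b ρ q * (∑ i, v22 i b q * pd a (fun y => Real.log (h i y)) q)
         + ρ q * (∑ i, (pd b (v22 i b) q * pd a (fun y => Real.log (h i y)) q
              + v22 i b q * pd b (fun x => pd a (fun y => Real.log (h i y)) x) q)))
      + (pd b ρ q * σ2 b q * pd a Φ q + ρ q * pd b (σ2 b) q * pd a Φ q
         + ρ q * σ2 b q * pd b (fun x => pd a Φ x) q)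
      = 0 := by
    intro a b hab
    have cSS : ContDiffOn ℝ (⊤ : ℕ∞) (fun x => (∑ i, pd a (fun y => Real.log (h i y)) x)
        + 2 * pd a (fun y => Real.log (h b y)) x) U :=
      (ContDiffOn.sum fun i _ => hpdC a (hLC i)).add
        (contDiffOn_const.mul (hpdC a (hLC b)))
    have cQQ : ContDiffOn ℝ (⊤ : ℕ∞) (fun x => ∑ i, v22 i b x * pd a (fun y => Real.log (h i y)) x) U :=
      ContDiffOn.sum fun i _ => (hv22 i b).mul (hpdC a (hLC i))
    have h0 : pd b (fun x =>
        pd a ρ x * v22 a b x + ρ x * pd a (v22 a b) x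
        + ρ x * v22 a b x * ((∑ i, pd a (fun y => Real.log (h i y)) x)
            + 2 * pd a (fun y => Real.log (h b y)) x)
        - ρ x * (∑ i, v22 i b x * pd a (fun y => Real.log (h i y)) x)
        + ρ x * σ2 b x * pd a Φ x) q = 0 :=
      JeansAux.pd_zero hU hq (fun x hx => mixedv a b hab x hx)
    have E : pd b (fun x =>
        pd a ρ x * v22 a b x + ρ x * pd a (v22 a b) x
        + ρ x * v22 a b x * ((∑ i, pd a (fun y => Real.log (h i y)) x)
            + 2 * pd a (fun y => Real.log (h b y)) x)
        - ρ x * (∑ i, v22 i b x * pd a (fun y => Real.log (h i y)) x)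
        + ρ x * σ2 b x * pd a Φ x) q
      = pd b (fun x => pd a ρ x * v22 a b x) q
        + pd b (fun x => ρ x * pd a (v22 a b) x) q
        + pd b (fun x => ρ x * v22 a b x * ((∑ i, pd a (fun y => Real.log (h i y)) x)
            + 2 * pd a (fun y => Real.log (h b y)) x)) q
        - pd b (fun x => ρ x * (∑ i, v22 i b x * pd a (fun y => Real.log (h i y)) x)) q
        + pd b (fun x => ρ x * σ2 b x * pd a Φ x) q :=
      JeansAux.pd_comb5
        (DA hq ((hpdC a hρ).mul (hv22 a b)))
        (DA hq (hρ.mul (hpdC a (hv22 a b))))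
        (DA hq ((hρ.mul (hv22 a b)).mul cSS))
        (DA hq (hρ.mul cQQ))
        (DA hq ((hρ.mul (hσ2 b)).mul (hpdC a hΦ)))
    rw [E] at h0
    have T1 : pd b (fun x => pd a ρ x * v22 a b x) q
        = pd b (fun x => pd a ρ x) q * v22 a b q + pd a ρ q * pd b (v22 a b) q :=
      JeansAux.pd_mul (DA hq (hpdC a hρ)) (DA hq (hv22 a b))
    have T2 : pd b (fun x => ρ x * pd a (v22 a b) x) q
        = pd b ρ q * pd a (v22 a b) q + ρ q * pd b (fun x => pd a (v22 a b) x) q :=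
      JeansAux.pd_mul (DA hq hρ) (DA hq (hpdC a (hv22 a b)))
    have T3 : pd b (fun x => ρ x * v22 a b x * ((∑ i, pd a (fun y => Real.log (h i y)) x)
            + 2 * pd a (fun y => Real.log (h b y)) x)) q
        = pd b ρ q * v22 a b q * ((∑ i, pd a (fun y => Real.log (h i y)) q)
            + 2 * pd a (fun y => Real.log (h b y)) q)
          + ρ q * pd b (v22 a b) q * ((∑ i, pd a (fun y => Real.log (h i y)) q)
            + 2 * pd a (fun y => Real.log (h b y)) q)
          + ρ q * v22 a b q * pd b (fun x => (∑ i, pd a (fun y => Real.log (h i y)) x)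
            + 2 * pd a (fun y => Real.log (h b y)) x) q :=
      JeansAux.pd_mul3 (DA hq hρ) (DA hq (hv22 a b)) (DA hq cSS)
    have T3b : pd b (fun x => (∑ i, pd a (fun y => Real.log (h i y)) x)
            + 2 * pd a (fun y => Real.log (h b y)) x) q
        = (∑ i, pd b (fun x => pd a (fun y => Real.log (h i y)) x) q)
            + 2 * pd b (fun x => pd a (fun y => Real.log (h b y)) x) q := by
      have A1 : pd b (fun x => (∑ i, pd a (fun y => Real.log (h i y)) x)
            + 2 * pd a (fun y => Real.log (h b y)) x) q
          = pd b (fun x => ∑ i, pd a (fun y => Real.log (h i y)) x) q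
            + pd b (fun x => 2 * pd a (fun y => Real.log (h b y)) x) q :=
        JeansAux.pd_add (DifferentiableAt.fun_sum fun i _ => DA hq (hpdC a (hLC i)))
          ((DA hq (hpdC a (hLC b))).const_mul 2)
      have A2 : pd b (fun x => ∑ i, pd a (fun y => Real.log (h i y)) x) q
          = ∑ i, pd b (fun x => pd a (fun y => Real.log (h i y)) x) q :=
        JeansAux.pd_sum _ _ (fun i _ => DA hq (hpdC a (hLC i)))
      have A3 : pd b (fun x => 2 * pd a (fun y => Real.log (h b y)) x) q
          = 2 * pd b (fun x => pd a (fun y => Real.log (h b y)) x) q :=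
        JeansAux.pd_const_mul 2 (DA hq (hpdC a (hLC b)))
      rw [A1, A2, A3]
    have T4 : pd b (fun x => ρ x * (∑ i, v22 i b x * pd a (fun y => Real.log (h i y)) x)) q
        = pd b ρ q * (∑ i, v22 i b q * pd a (fun y => Real.log (h i y)) q)
          + ρ q * pd b (fun x => ∑ i, v22 i b x * pd a (fun y => Real.log (h i y)) x) q :=
      JeansAux.pd_mul (DA hq hρ) (DA hq cQQ)
    have T4b : pd b (fun x => ∑ i, v22 i b x * pd a (fun y => Real.log (h i y)) x) q
        = ∑ i, (pd b (v22 i b) q * pd a (fun y => Real.log (h i y)) q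
            + v22 i b q * pd b (fun x => pd a (fun y => Real.log (h i y)) x) q) := by
      have B1 : pd b (fun x => ∑ i, v22 i b x * pd a (fun y => Real.log (h i y)) x) q
          = ∑ i, pd b (fun x => v22 i b x * pd a (fun y => Real.log (h i y)) x) q :=
        JeansAux.pd_sum _ _ (fun i _ => (DA hq (hv22 i b)).mul (DA hq (hpdC a (hLC i))))
      rw [B1]
      exact Finset.sum_congr rfl fun i _ =>
        JeansAux.pd_mul (DA hq (hv22 i b)) (DA hq (hpdC a (hLC i)))
    have T5 : pd b (fun x => ρ x * σ2 b x * pd a Φ x) q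
        = pd b ρ q * σ2 b q * pd a Φ q + ρ q * pd b (σ2 b) q * pd a Φ q
          + ρ q * σ2 b q * pd b (fun x => pd a Φ x) q :=
      JeansAux.pd_mul3 (DA hq hρ) (DA hq (hσ2 b)) (DA hq (hpdC a hΦ))
    rw [T1, T2, T3, T3b, T4, T4b, T5] at h0
    linear_combination h0
  -- commutation of second derivatives
  have hcommL : ∀ i : Fin n, pd k (fun x => pd j (fun y => Real.log (h i y)) x) q
      = pd j (fun x => pd k (fun y => Real.log (h i y)) x) q :=
    fun i => JeansAux.pd_comm hU hq (hLC i)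
  have hcommρ : pd k (fun x => pd j ρ x) q = pd j (fun x => pd k ρ x) q :=
    JeansAux.pd_comm hU hq hρ
  have hcommw : pd k (fun x => pd j (v22 j k) x) q = pd j (fun x => pd k (v22 j k) x) q :=
    JeansAux.pd_comm hU hq (hv22 j k)
  have hcommΦ : pd k (fun x => pd j Φ x) q = pd j (fun x => pd k Φ x) q :=
    JeansAux.pd_comm hU hq hΦ
  -- fact 1 : derivative in direction k of the (j,k) mixed equation
  have fact1 := mdf j k hjk
  rw [hcommρ, hcommw, hcommΦ] at fact1
  simp only [hcommL] at fact1
  simp only [Finset.sum_add_distrib] at fact1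
  -- fact 2 : derivative in direction j of the (k,j) mixed equation
  have fact2 := mdf k j (Ne.symm hjk)
  simp only [hws k j] at fact2
  simp only [Finset.sum_add_distrib] at fact2
  -- facts 3, 4 : the mixed equations at q
  have fact3 := mixedv j k hjk q hq
  have fact4 := mixedv k j (Ne.symm hjk) q hq
  rw [hws k j] at fact4
  -- facts 5, 6 : diagonal equations at q
  have fact5 := diagv j q hq
  have fact6 := diagv k q hq
  -- facts 7, 8 : second-order equations at q
  have fact7 := e2v j q hq
  have fact8 := e2v k q hq
  -- fact 9 : family of mixed equations with first index k, weighted by pd j log h i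
  have fam9 : ∀ i : Fin n, i ≠ k →
      pd k ρ q * v22 i k q + ρ q * pd k (v22 i k) q
        + ρ q * v22 i k q * ((∑ m, pd k (fun y => Real.log (h m y)) q)
            + 2 * pd k (fun y => Real.log (h i y)) q)
        - ρ q * (∑ m, v22 m i q * pd k (fun y => Real.log (h m y)) q)
        + ρ q * σ2 i q * pd k Φ q = 0 := by
    intro i hik
    have e := mixedv k i (Ne.symm hik) q hq
    rw [hws k i] at e
    linear_combination e
  have fact9 : (∑ i, pd j (fun y => Real.log (h i y)) q *
        (pd k ρ q * v22 i k q + ρ q * pd k (v22 i k) q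
          + ρ q * v22 i k q * ((∑ m, pd k (fun y => Real.log (h m y)) q)
              + 2 * pd k (fun y => Real.log (h i y)) q)
          - ρ q * (∑ m, v22 m i q * pd k (fun y => Real.log (h m y)) q)
          + ρ q * σ2 i q * pd k Φ q))
      = pd j (fun y => Real.log (h k y)) q *
        (pd k ρ q * v22 k k q + ρ q * pd k (v22 k k) q
          + ρ q * v22 k k q * ((∑ m, pd k (fun y => Real.log (h m y)) q)
              + 2 * pd k (fun y => Real.log (h k y)) q)
          - ρ q * (∑ m, v22 m k q * pd k (fun y => Real.log (h m y)) q)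
          + ρ q * σ2 k q * pd k Φ q) := by
    exact Finset.sum_eq_single_of_mem k (Finset.mem_univ k)
      (fun i _ hik => by rw [fam9 i hik, mul_zero])
  -- fact 10 : family of mixed equations with first index j, weighted by pd k log h i
  have fam10 : ∀ i : Fin n, i ≠ j →
      pd j ρ q * v22 i j q + ρ q * pd j (v22 i j) q
        + ρ q * v22 i j q * ((∑ m, pd j (fun y => Real.log (h m y)) q)
            + 2 * pd j (fun y => Real.log (h i y)) q)
        - ρ q * (∑ m, v22 m i q * pd j (fun y => Real.log (h m y)) q)
        + ρ q * σ2 i q * pd j Φ q = 0 := by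
    intro i hij
    have e := mixedv j i (Ne.symm hij) q hq
    rw [hws j i] at e
    linear_combination e
  have fact10 : (∑ i, pd k (fun y => Real.log (h i y)) q *
        (pd j ρ q * v22 i j q + ρ q * pd j (v22 i j) q
          + ρ q * v22 i j q * ((∑ m, pd j (fun y => Real.log (h m y)) q)
              + 2 * pd j (fun y => Real.log (h i y)) q)
          - ρ q * (∑ m, v22 m i q * pd j (fun y => Real.log (h m y)) q)
          + ρ q * σ2 i q * pd j Φ q))
      = pd k (fun y => Real.log (h j y)) q *
        (pd j ρ q * v22 j j q + ρ q * pd j (v22 j j) q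
          + ρ q * v22 j j q * ((∑ m, pd j (fun y => Real.log (h m y)) q)
              + 2 * pd j (fun y => Real.log (h j y)) q)
          - ρ q * (∑ m, v22 m j q * pd j (fun y => Real.log (h m y)) q)
          + ρ q * σ2 j q * pd j Φ q) := by
    exact Finset.sum_eq_single_of_mem j (Finset.mem_univ j)
      (fun i _ hij => by rw [fam10 i hij, mul_zero])
  -- fact 11 : double sum symmetry
  have fact11 : (∑ i, pd j (fun y => Real.log (h i y)) q *
        (∑ m, v22 m i q * pd k (fun y => Real.log (h m y)) q))
      = ∑ i, pd k (fun y => Real.log (h i y)) q *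
        (∑ m, v22 m i q * pd j (fun y => Real.log (h m y)) q) := by
    have L1 : (∑ i, pd j (fun y => Real.log (h i y)) q *
        (∑ m, v22 m i q * pd k (fun y => Real.log (h m y)) q))
        = ∑ i, ∑ m, pd j (fun y => Real.log (h i y)) q *
            (v22 m i q * pd k (fun y => Real.log (h m y)) q) :=
      Finset.sum_congr rfl fun i _ => by rw [Finset.mul_sum]
    rw [L1, Finset.sum_comm]
    refine Finset.sum_congr rfl fun c _ => ?_
    rw [Finset.mul_sum]
    refine Finset.sum_congr rfl fun i _ => ?_
    rw [hsymm i c q]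
    ring
  -- decompose fact9's sum into basis sums
  have hd9 : (∑ i, pd j (fun y => Real.log (h i y)) q * (pd k ρ q * v22 i k q + ρ q * pd k (v22 i k) q
          + ρ q * v22 i k q * ((∑ m, pd k (fun y => Real.log (h m y)) q)
              + 2 * pd k (fun y => Real.log (h i y)) q)
          - ρ q * (∑ m, v22 m i q * pd k (fun y => Real.log (h m y)) q)
          + ρ q * σ2 i q * pd k Φ q))
      = pd k ρ q * (∑ i, v22 i k q * pd j (fun y => Real.log (h i y)) q) + ρ q * (∑ i, pd k (v22 i k) q * pd j (fun y => Real.log (h i y)) q)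
        + (ρ q * (∑ m, pd k (fun y => Real.log (h m y)) q)) * (∑ i, v22 i k q * pd j (fun y => Real.log (h i y)) q)
        + (2 * ρ q) * (∑ i, v22 i k q * pd j (fun y => Real.log (h i y)) q * pd k (fun y => Real.log (h i y)) q)
        + (-(ρ q)) * (∑ i, pd j (fun y => Real.log (h i y)) q * (∑ m, v22 m i q * pd k (fun y => Real.log (h m y)) q))
        + (ρ q * pd k Φ q) * (∑ i, σ2 i q * pd j (fun y => Real.log (h i y)) q) := by
    calc (∑ i, pd j (fun y => Real.log (h i y)) q * (pd k ρ q * v22 i k q + ρ q * pd k (v22 i k) q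
          + ρ q * v22 i k q * ((∑ m, pd k (fun y => Real.log (h m y)) q)
              + 2 * pd k (fun y => Real.log (h i y)) q)
          - ρ q * (∑ m, v22 m i q * pd k (fun y => Real.log (h m y)) q)
          + ρ q * σ2 i q * pd k Φ q))
        = ∑ i, (pd k ρ q * (v22 i k q * pd j (fun y => Real.log (h i y)) q)
            + ρ q * (pd k (v22 i k) q * pd j (fun y => Real.log (h i y)) q)
            + (ρ q * (∑ m, pd k (fun y => Real.log (h m y)) q)) * (v22 i k q * pd j (fun y => Real.log (h i y)) q)
            + (2 * ρ q) * (v22 i k q * pd j (fun y => Real.log (h i y)) q * pd k (fun y => Real.log (h i y)) q)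
            + (-(ρ q)) * (pd j (fun y => Real.log (h i y)) q * (∑ m, v22 m i q * pd k (fun y => Real.log (h m y)) q))
            + (ρ q * pd k Φ q) * (σ2 i q * pd j (fun y => Real.log (h i y)) q)) :=
          Finset.sum_congr rfl fun i _ => by ring
      _ = _ := by
          simp only [Finset.sum_add_distrib, ← Finset.mul_sum]
  rw [hd9] at fact9
  -- decompose fact10's sum into basis sums
  have hd10 : (∑ i, pd k (fun y => Real.log (h i y)) q * (pd j ρ q * v22 i j q + ρ q * pd j (v22 i j) q
          + ρ q * v22 i j q * ((∑ m, pd j (fun y => Real.log (h m y)) q)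
              + 2 * pd j (fun y => Real.log (h i y)) q)
          - ρ q * (∑ m, v22 m i q * pd j (fun y => Real.log (h m y)) q)
          + ρ q * σ2 i q * pd j Φ q))
      = pd j ρ q * (∑ i, v22 i j q * pd k (fun y => Real.log (h i y)) q) + ρ q * (∑ i, pd j (v22 i j) q * pd k (fun y => Real.log (h i y)) q)
        + (ρ q * (∑ m, pd j (fun y => Real.log (h m y)) q)) * (∑ i, v22 i j q * pd k (fun y => Real.log (h i y)) q)
        + (2 * ρ q) * (∑ i, v22 i j q * pd j (fun y => Real.log (h i y)) q * pd k (fun y => Real.log (h i y)) q)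
        + (-(ρ q)) * (∑ i, pd k (fun y => Real.log (h i y)) q * (∑ m, v22 m i q * pd j (fun y => Real.log (h m y)) q))
        + (ρ q * pd j Φ q) * (∑ i, σ2 i q * pd k (fun y => Real.log (h i y)) q) := by
    calc (∑ i, pd k (fun y => Real.log (h i y)) q * (pd j ρ q * v22 i j q + ρ q * pd j (v22 i j) q
          + ρ q * v22 i j q * ((∑ m, pd j (fun y => Real.log (h m y)) q)
              + 2 * pd j (fun y => Real.log (h i y)) q)
          - ρ q * (∑ m, v22 m i q * pd j (fun y => Real.log (h m y)) q)
          + ρ q * σ2 i q * pd j Φ q))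
        = ∑ i, (pd j ρ q * (v22 i j q * pd k (fun y => Real.log (h i y)) q)
            + ρ q * (pd j (v22 i j) q * pd k (fun y => Real.log (h i y)) q)
            + (ρ q * (∑ m, pd j (fun y => Real.log (h m y)) q)) * (v22 i j q * pd k (fun y => Real.log (h i y)) q)
            + (2 * ρ q) * (v22 i j q * pd j (fun y => Real.log (h i y)) q * pd k (fun y => Real.log (h i y)) q)
            + (-(ρ q)) * (pd k (fun y => Real.log (h i y)) q * (∑ m, v22 m i q * pd j (fun y => Real.log (h m y)) q))
            + (ρ q * pd j Φ q) * (σ2 i q * pd k (fun y => Real.log (h i y)) q)) :=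
          Finset.sum_congr rfl fun i _ => by ring
      _ = _ := by
          simp only [Finset.sum_add_distrib, ← Finset.mul_sum]
  rw [hd10] at fact10
  -- derivative of (h c)⁻² on U
  have hinv : ∀ (a : Fin n) (c : Fin n) (x : Fin n → ℝ), x ∈ U →
      pd a (fun y => ((h c y) ^ 2)⁻¹) x
        = -2 * (((h c x) ^ 2)⁻¹ * pd a (fun y => Real.log (h c y)) x) := by
    intro a c x hx
    have dh := DA hx (hsm c)
    have hid : (fun y => ((h c y) ^ 2)⁻¹ * (h c y * h c y)) = fun _ => (1:ℝ) := by
      funext y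
      have : h c y * h c y = (h c y) ^ 2 := (sq (h c y)).symm
      rw [this, inv_mul_cancel₀ (pow_ne_zero 2 (hne c y))]
    have dinv : DifferentiableAt ℝ (fun y => ((h c y) ^ 2)⁻¹) x :=
      (dh.pow 2).inv (pow_ne_zero 2 (hne c x))
    have e0 : pd a (fun y => ((h c y) ^ 2)⁻¹ * (h c y * h c y)) x = 0 := by
      rw [hid]
      unfold pd
      simp
    rw [JeansAux.pd_mul (g := fun y => h c y * h c y) dinv (dh.mul dh), JeansAux.pd_mul dh dh] at e0
    rw [JeansAux.pd_log dh (hne c x)]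
    have h2 : h c x ≠ 0 := hne c x
    have e1 : pd a (fun y => ((h c y) ^ 2)⁻¹) x * (h c x * h c x)
        = -(((h c x) ^ 2)⁻¹ * (pd a (h c) x * h c x + h c x * pd a (h c) x)) := by
      linarith [e0]
    have e2 : pd a (fun y => ((h c y) ^ 2)⁻¹) x
        = -(((h c x) ^ 2)⁻¹ * (pd a (h c) x * h c x + h c x * pd a (h c) x)) / (h c x * h c x) :=
      eq_div_of_mul_eq (mul_ne_zero h2 h2) e1
    rw [e2]
    field_simp
    ring
  -- expansion of Dst applied to (h c)⁻²
  have hDstK : ∀ c : Fin n, (h c q) ^ 2 * Dst h j k (fun q' => ((h c q') ^ 2)⁻¹) q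
      = (4 * pd j (fun y => Real.log (h c y)) q * pd k (fun y => Real.log (h c y)) q - 2 * pd j (fun x => pd k (fun y => Real.log (h c y)) x) q - 4 * pd j (fun y => Real.log (h k y)) q * pd k (fun y => Real.log (h c y)) q - 4 * pd k (fun y => Real.log (h j y)) q * pd j (fun y => Real.log (h c y)) q) := by
    intro c
    have dinvq : DifferentiableAt ℝ (fun y => ((h c y) ^ 2)⁻¹) q :=
      ((DA hq (hsm c)).pow 2).inv (pow_ne_zero 2 (hne c q))
    have dpdkL : DifferentiableAt ℝ (fun x => pd k (fun y => Real.log (h c y)) x) q :=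
      DA hq (hpdC k (hLC c))
    have hi2 : pd j (fun x => pd k (fun y => ((h c y) ^ 2)⁻¹) x) q
        = pd j (fun x => -2 * (((h c x) ^ 2)⁻¹ * pd k (fun y => Real.log (h c y)) x)) q :=
      JeansAux.pd_congr hU hq (fun x hx => hinv k c x hx)
    have cinv : ContDiffOn ℝ (⊤ : ℕ∞) (fun y => ((h c y) ^ 2)⁻¹) U :=
      ((hsm c).pow 2).inv (fun x _ => pow_ne_zero 2 (hne c x))
    have hi3 : pd j (fun x => -2 * (((h c x) ^ 2)⁻¹ * pd k (fun y => Real.log (h c y)) x)) q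
        = -2 * pd j (fun x => ((h c x) ^ 2)⁻¹ * pd k (fun y => Real.log (h c y)) x) q :=
      JeansAux.pd_const_mul (-2) (dinvq.mul dpdkL)
    have hi4 : pd j (fun x => ((h c x) ^ 2)⁻¹ * pd k (fun y => Real.log (h c y)) x) q
        = pd j (fun y => ((h c y) ^ 2)⁻¹) q * pd k (fun y => Real.log (h c y)) q
          + ((h c q) ^ 2)⁻¹ * pd j (fun x => pd k (fun y => Real.log (h c y)) x) q :=
      JeansAux.pd_mul dinvq dpdkL
    have hmain : Dst h j k (fun q' => ((h c q') ^ 2)⁻¹) q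
        = pd j (fun x => pd k (fun y => ((h c y) ^ 2)⁻¹) x) q
          + pd j (fun y => Real.log ((h k y) ^ 2)) q * pd k (fun y => ((h c y) ^ 2)⁻¹) q
          + pd k (fun y => Real.log ((h j y) ^ 2)) q * pd j (fun y => ((h c y) ^ 2)⁻¹) q := rfl
    rw [hmain, hi2, hi3, hi4, hinv j c q hq, hinv k c q hq, hlog2 j k q hq, hlog2 k j q hq]
    have h2 : h c q ≠ 0 := hne c q
    field_simp
    ring
  -- expansion of Dst applied to Φ
  have hDstPhi : Dst h j k Φ q
      = pd j (fun x => pd k Φ x) q + 2 * pd j (fun y => Real.log (h k y)) q * pd k Φ q + 2 * pd k (fun y => Real.log (h j y)) q * pd j Φ q := by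
    have hmain : Dst h j k Φ q
        = pd j (fun x => pd k Φ x) q
          + pd j (fun y => Real.log ((h k y) ^ 2)) q * pd k Φ q
          + pd k (fun y => Real.log ((h j y) ^ 2)) q * pd j Φ q := rfl
    rw [hmain, hlog2 j k q hq, hlog2 k j q hq]
  -- rewrite the goal
  rw [← hdiag j q, ← hdiag k q]
  have hTj : (v22 j j q - 3 * v22 j k q) * (h j q) ^ 2 *
        Dst h j k (fun q' => ((h j q') ^ 2)⁻¹) q
      = (v22 j j q - 3 * v22 j k q) * (4 * pd j (fun y => Real.log (h j y)) q * pd k (fun y => Real.log (h j y)) q - 2 * pd j (fun x => pd k (fun y => Real.log (h j y)) x) q - 4 * pd j (fun y => Real.log (h k y)) q * pd k (fun y => Real.log (h j y)) q - 4 * pd k (fun y => Real.log (h j y)) q * pd j (fun y => Real.log (h j y)) q) := by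
    rw [mul_assoc, hDstK j]
  have hTk : (v22 k k q - 3 * v22 j k q) * (h k q) ^ 2 *
        Dst h j k (fun q' => ((h k q') ^ 2)⁻¹) q
      = (v22 k k q - 3 * v22 j k q) * (4 * pd j (fun y => Real.log (h k y)) q * pd k (fun y => Real.log (h k y)) q - 2 * pd j (fun x => pd k (fun y => Real.log (h k y)) x) q - 4 * pd j (fun y => Real.log (h k y)) q * pd k (fun y => Real.log (h k y)) q - 4 * pd k (fun y => Real.log (h j y)) q * pd j (fun y => Real.log (h k y)) q) := by
    rw [mul_assoc, hDstK k]
  have hsum1 : (∑ i ∈ Finset.univ.filter (fun i => i ≠ j ∧ i ≠ k),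
        (v22 i j q - v22 i k q) * (h i q) ^ 2 *
          Dst h j k (fun q' => ((h i q') ^ 2)⁻¹) q)
      = ∑ i ∈ Finset.univ.filter (fun i => i ≠ j ∧ i ≠ k), (v22 i j q - v22 i k q) * (4 * pd j (fun y => Real.log (h i y)) q * pd k (fun y => Real.log (h i y)) q - 2 * pd j (fun x => pd k (fun y => Real.log (h i y)) x) q - 4 * pd j (fun y => Real.log (h k y)) q * pd k (fun y => Real.log (h i y)) q - 4 * pd k (fun y => Real.log (h j y)) q * pd j (fun y => Real.log (h i y)) q) := by
    refine Finset.sum_congr rfl fun c _ => ?_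
    rw [mul_assoc, hDstK c]
  have hsplit : (∑ i ∈ Finset.univ.filter (fun i => i ≠ j ∧ i ≠ k), (v22 i j q - v22 i k q) * (4 * pd j (fun y => Real.log (h i y)) q * pd k (fun y => Real.log (h i y)) q - 2 * pd j (fun x => pd k (fun y => Real.log (h i y)) x) q - 4 * pd j (fun y => Real.log (h k y)) q * pd k (fun y => Real.log (h i y)) q - 4 * pd k (fun y => Real.log (h j y)) q * pd j (fun y => Real.log (h i y)) q))
      = (∑ i, (v22 i j q - v22 i k q) * (4 * pd j (fun y => Real.log (h i y)) q * pd k (fun y => Real.log (h i y)) q - 2 * pd j (fun x => pd k (fun y => Real.log (h i y)) x) q - 4 * pd j (fun y => Real.log (h k y)) q * pd k (fun y => Real.log (h i y)) q - 4 * pd k (fun y => Real.log (h j y)) q * pd j (fun y => Real.log (h i y)) q)) - (v22 j j q - v22 j k q) * (4 * pd j (fun y => Real.log (h j y)) q * pd k (fun y => Real.log (h j y)) q - 2 * pd j (fun x => pd k (fun y => Real.log (h j y)) x) q - 4 * pd j (fun y => Real.log (h k y)) q * pd k (fun y => Real.log (h j y)) q - 4 * pd k (fun y => Real.log (h j y))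 q * pd j (fun y => Real.log (h j y)) q) - (v22 k j q - v22 k k q) * (4 * pd j (fun y => Real.log (h k y)) q * pd k (fun y => Real.log (h k y)) q - 2 * pd j (fun x => pd k (fun y => Real.log (h k y)) x) q - 4 * pd j (fun y => Real.log (h k y)) q * pd k (fun y => Real.log (h k y)) q - 4 * pd k (fun y => Real.log (h j y)) q * pd j (fun y => Real.log (h k y)) q) := by
    have hfil : Finset.univ.filter (fun i => i ≠ j ∧ i ≠ k) = (Finset.univ.erase j).erase k := by
      ext c
      simp only [Finset.mem_filter, Finset.mem_univ, true_and, Finset.mem_erase]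
      tauto
    rw [hfil]
    have e1 : (v22 k j q - v22 k k q) * (4 * pd j (fun y => Real.log (h k y)) q * pd k (fun y => Real.log (h k y)) q - 2 * pd j (fun x => pd k (fun y => Real.log (h k y)) x) q - 4 * pd j (fun y => Real.log (h k y)) q * pd k (fun y => Real.log (h k y)) q - 4 * pd k (fun y => Real.log (h j y)) q * pd j (fun y => Real.log (h k y)) q) + (∑ i ∈ (Finset.univ.erase j).erase k, (v22 i j q - v22 i k q) * (4 * pd j (fun y => Real.log (h i y)) q * pd k (fun y => Real.log (h i y)) q - 2 * pd j (fun x => pd k (fun y => Real.log (h i y)) x) q - 4 * pd j (fun y => Real.log (h k y)) q * pd k (fun y => Real.log (h i y)) q - 4 * pd k (fun y => Real.log (h j y)) q * pd j (fun y => Real.log (h i y)) q))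
        = ∑ i ∈ Finset.univ.erase j, (v22 i j q - v22 i k q) * (4 * pd j (fun y => Real.log (h i y)) q * pd k (fun y => Real.log (h i y)) q - 2 * pd j (fun x => pd k (fun y => Real.log (h i y)) x) q - 4 * pd j (fun y => Real.log (h k y)) q * pd k (fun y => Real.log (h i y)) q - 4 * pd k (fun y => Real.log (h j y)) q * pd j (fun y => Real.log (h i y)) q) :=
      Finset.add_sum_erase _ (fun i => (v22 i j q - v22 i k q) * (4 * pd j (fun y => Real.log (h i y)) q * pd k (fun y => Real.log (h i y)) q - 2 * pd j (fun x => pd k (fun y => Real.log (h i y)) x) q - 4 * pd j (fun y => Real.log (h k y)) q * pd k (fun y => Real.log (h i y)) q - 4 * pd k (fun y => Real.log (h j y)) q * pd j (fun y => Real.log (h i y)) q)) (Finset.mem_erase.2 ⟨Ne.symm hjk, Finset.mem_univ k⟩)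
    have e2 : (v22 j j q - v22 j k q) * (4 * pd j (fun y => Real.log (h j y)) q * pd k (fun y => Real.log (h j y)) q - 2 * pd j (fun x => pd k (fun y => Real.log (h j y)) x) q - 4 * pd j (fun y => Real.log (h k y)) q * pd k (fun y => Real.log (h j y)) q - 4 * pd k (fun y => Real.log (h j y)) q * pd j (fun y => Real.log (h j y)) q) + (∑ i ∈ Finset.univ.erase j, (v22 i j q - v22 i k q) * (4 * pd j (fun y => Real.log (h i y)) q * pd k (fun y => Real.log (h i y)) q - 2 * pd j (fun x => pd k (fun y => Real.log (h i y)) x) q - 4 * pd j (fun y => Real.log (h k y)) q * pd k (fun y => Real.log (h i y)) q - 4 * pd k (fun y => Real.log (h j y)) q * pd j (fun y => Real.log (h i y)) q))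
        = ∑ i, (v22 i j q - v22 i k q) * (4 * pd j (fun y => Real.log (h i y)) q * pd k (fun y => Real.log (h i y)) q - 2 * pd j (fun x => pd k (fun y => Real.log (h i y)) x) q - 4 * pd j (fun y => Real.log (h k y)) q * pd k (fun y => Real.log (h i y)) q - 4 * pd k (fun y => Real.log (h j y)) q * pd j (fun y => Real.log (h i y)) q) :=
      Finset.add_sum_erase _ (fun i => (v22 i j q - v22 i k q) * (4 * pd j (fun y => Real.log (h i y)) q * pd k (fun y => Real.log (h i y)) q - 2 * pd j (fun x => pd k (fun y => Real.log (h i y)) x) q - 4 * pd j (fun y => Real.log (h k y)) q * pd k (fun y => Real.log (h i y)) q - 4 * pd k (fun y => Real.log (h j y)) q * pd j (fun y => Real.log (h i y)) q)) (Finset.mem_univ j)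
    linarith [e1, e2]
  have hdec : (∑ i, (v22 i j q - v22 i k q) * (4 * pd j (fun y => Real.log (h i y)) q * pd k (fun y => Real.log (h i y)) q - 2 * pd j (fun x => pd k (fun y => Real.log (h i y)) x) q - 4 * pd j (fun y => Real.log (h k y)) q * pd k (fun y => Real.log (h i y)) q - 4 * pd k (fun y => Real.log (h j y)) q * pd j (fun y => Real.log (h i y)) q))
      = (4:ℝ) * (∑ i, v22 i j q * pd j (fun y => Real.log (h i y)) q * pd k (fun y => Real.log (h i y)) q) + (-4:ℝ) * (∑ i, v22 i k q * pd j (fun y => Real.log (h i y)) q * pd k (fun y => Real.log (h i y)) q) + (-2:ℝ) * (∑ i, v22 i j q * pd j (fun x => pd k (fun y => Real.log (h i y)) x) q) + (2:ℝ) * (∑ i, v22 i k q * pd j (fun x => pd k (fun y => Real.log (h i y)) x) q)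
        + (-(4 * pd j (fun y => Real.log (h k y)) q)) * (∑ i, v22 i j q * pd k (fun y => Real.log (h i y)) q) + (4 * pd j (fun y => Real.log (h k y)) q) * (∑ i, v22 i k q * pd k (fun y => Real.log (h i y)) q)
        + (-(4 * pd k (fun y => Real.log (h j y)) q)) * (∑ i, v22 i j q * pd j (fun y => Real.log (h i y)) q) + (4 * pd k (fun y => Real.log (h j y)) q) * (∑ i, v22 i k q * pd j (fun y => Real.log (h i y)) q) := by
    calc (∑ i, (v22 i j q - v22 i k q) * (4 * pd j (fun y => Real.log (h i y)) q * pd k (fun y => Real.log (h i y)) q - 2 * pd j (fun x => pd k (fun y => Real.log (h i y)) x) q - 4 * pd j (fun y => Real.log (h k y)) q * pd k (fun y => Real.log (h i y)) q - 4 * pd k (fun y => Real.log (h j y)) q * pd j (fun y => Real.log (h i y)) q))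
        = ∑ i, ((4:ℝ) * (v22 i j q * pd j (fun y => Real.log (h i y)) q * pd k (fun y => Real.log (h i y)) q)
            + (-4:ℝ) * (v22 i k q * pd j (fun y => Real.log (h i y)) q * pd k (fun y => Real.log (h i y)) q)
            + (-2:ℝ) * (v22 i j q * pd j (fun x => pd k (fun y => Real.log (h i y)) x) q)
            + (2:ℝ) * (v22 i k q * pd j (fun x => pd k (fun y => Real.log (h i y)) x) q)
            + (-(4 * pd j (fun y => Real.log (h k y)) q)) * (v22 i j q * pd k (fun y => Real.log (h i y)) q)
            + (4 * pd j (fun y => Real.log (h k y)) q) * (v22 i k q * pd k (fun y => Real.log (h i y)) q)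
            + (-(4 * pd k (fun y => Real.log (h j y)) q)) * (v22 i j q * pd j (fun y => Real.log (h i y)) q)
            + (4 * pd k (fun y => Real.log (h j y)) q) * (v22 i k q * pd j (fun y => Real.log (h i y)) q)) :=
          Finset.sum_congr rfl fun i _ => by ring
      _ = _ := by
          simp only [Finset.sum_add_distrib, ← Finset.mul_sum]
  rw [hTj, hTk, hsum1, hsplit, hdec, hDstPhi]
  simp only [hsymm k j]
  apply mul_left_cancel₀ (hρpos q).ne'
  linear_combination (-2:ℝ) * fact1 + 2 * fact2
    - (2 * ((∑ i, pd k (fun y => Real.log (h i y)) q) + 2 * pd k (fun y => Real.log (h j y)) q)) * fact3 + (2 * ((∑ i, pd j (fun y => Real.log (h i y)) q) + 2 * pd j (fun y => Real.log (h k y)) q)) * fact4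
    + 2 * pd k (fun y => Real.log (h j y)) q * fact5 - 2 * pd j (fun y => Real.log (h k y)) q * fact6
    - 2 * pd k Φ q * fact7 + 2 * pd j Φ q * fact8
    - 2 * fact9 + 2 * fact10 - 2 * ρ q * fact11
end

section
/- Under the hypotheses of the previous identity, if additionally the Stäckel condition 𝒟_{jk}(hᵢ⁻²) = 0 holds for all i and j ≠ k, and the second moments are pairwise distinct pointwise (⟨vⱼ²⟩(q) ≠ ⟨vₖ²⟩(q) for all q and j ≠ k), then 𝒟_{jk}(Φ) = 0 for all j ≠ k, i.e., the potential is separable in the given Stäckel coordinates. -/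
open Filter

namespace StkAux

variable {n : ℕ} {f g : (Fin n → ℝ) → ℝ} {q : Fin n → ℝ} {j : Fin n}

lemma pd_of_hasFDerivAt {L : (Fin n → ℝ) →L[ℝ] ℝ} (j : Fin n) (h : HasFDerivAt f L q) :
    pd j f q = L (Pi.single j 1) := by rw [pd, h.fderiv]

lemma pd_congr_nhds (j : Fin n) (h : f =ᶠ[nhds q] g) : pd j f q = pd j g q := by
  rw [pd, pd, h.fderiv_eq]

lemma pd_congr_on {U : Set (Fin n → ℝ)} (hU : IsOpen U) (hq : q ∈ U) (j : Fin n)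
    (h : ∀ x ∈ U, f x = g x) : pd j f q = pd j g q :=
  pd_congr_nhds j (eventuallyEq_of_mem (hU.mem_nhds hq) h)

lemma pd_add (hf : DifferentiableAt ℝ f q) (hg : DifferentiableAt ℝ g q) :
    pd j (fun x => f x + g x) q = pd j f q + pd j g q := by
  rw [pd_of_hasFDerivAt j (f := fun x => f x + g x) (hf.hasFDerivAt.add hg.hasFDerivAt)]; simp [pd]

lemma pd_sub (hf : DifferentiableAt ℝ f q) (hg : DifferentiableAt ℝ g q) :
    pd j (fun x => f x - g x) q = pd j f q - pd j g q := by
  rw [pd_of_hasFDerivAt j (f := fun x => f x - g x) (hf.hasFDerivAt.sub hg.hasFDerivAt)]; simp [pd]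

lemma pd_mul (hf : DifferentiableAt ℝ f q) (hg : DifferentiableAt ℝ g q) :
    pd j (fun x => f x * g x) q = f q * pd j g q + g q * pd j f q := by
  rw [pd_of_hasFDerivAt j (f := fun x => f x * g x) (hf.hasFDerivAt.mul hg.hasFDerivAt)]; simp [pd]

lemma pd_const (c : ℝ) : pd j (fun _ => c) q = 0 := by
  rw [pd_of_hasFDerivAt j (hasFDerivAt_const c q)]; simp

lemma pd_const_mul (hf : DifferentiableAt ℝ f q) (c : ℝ) :
    pd j (fun x => c * f x) q = c * pd j f q := by
  rw [pd_of_hasFDerivAt j (hf.hasFDerivAt.const_mul c)]; simp [pd]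

lemma pd_sum {ι : Type*} (s : Finset ι) (F : ι → (Fin n → ℝ) → ℝ)
    (hF : ∀ i ∈ s, DifferentiableAt ℝ (F i) q) :
    pd j (fun x => ∑ i ∈ s, F i x) q = ∑ i ∈ s, pd j (F i) q := by
  rw [pd_of_hasFDerivAt j (f := fun x => ∑ i ∈ s, F i x) (HasFDerivAt.fun_sum (fun i hi => (hF i hi).hasFDerivAt))]
  simp [pd]

lemma pd_inv (hf : DifferentiableAt ℝ f q) (h0 : f q ≠ 0) :
    pd j (fun x => (f x)⁻¹) q = -((f q)^2)⁻¹ * pd j f q := by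
  have h1 := (hasDerivAt_inv h0).comp_hasFDerivAt q hf.hasFDerivAt
  have h2 : HasFDerivAt (fun x => (f x)⁻¹) (-(f q ^ 2)⁻¹ • fderiv ℝ f q) q := h1
  rw [pd_of_hasFDerivAt j h2]; simp [pd]

lemma pd_log (hf : DifferentiableAt ℝ f q) (h0 : f q ≠ 0) :
    pd j (fun x => Real.log (f x)) q = (f q)⁻¹ * pd j f q := by
  rw [pd_of_hasFDerivAt j (hf.hasFDerivAt.log h0)]; simp [pd]

lemma diffAt {U : Set (Fin n → ℝ)} (hU : IsOpen U) (hq : q ∈ U)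
    (hf : ContDiffOn ℝ (⊤ : ℕ∞) f U) : DifferentiableAt ℝ f q :=
  (hf.contDiffAt (hU.mem_nhds hq)).differentiableAt (by simp)

lemma contDiffOn_pd {U : Set (Fin n → ℝ)} (hU : IsOpen U)
    (hf : ContDiffOn ℝ (⊤ : ℕ∞) f U) (j : Fin n) :
    ContDiffOn ℝ (⊤ : ℕ∞) (fun x => pd j f x) U :=
  (hf.fderiv_of_isOpen hU (by simp)).clm_apply contDiffOn_const

lemma pd_comm {U : Set (Fin n → ℝ)} (hU : IsOpen U)
    (hf : ContDiffOn ℝ (⊤ : ℕ∞) f U) (hq : q ∈ U) (j k : Fin n) :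
    pd j (fun x => pd k f x) q = pd k (fun x => pd j f x) q := by
  have hf' : ContDiffOn ℝ (⊤ : ℕ∞) (fderiv ℝ f) U := hf.fderiv_of_isOpen hU (by simp)
  have hd : DifferentiableAt ℝ (fderiv ℝ f) q :=
    (hf'.contDiffAt (hU.mem_nhds hq)).differentiableAt (by simp)
  have hev : ∀ᶠ y in nhds q, HasFDerivAt f (fderiv ℝ f y) y := by
    filter_upwards [hU.mem_nhds hq] with y hy using (diffAt hU hy hf).hasFDerivAt
  have hsymm := second_derivative_symmetric_of_eventually hev hd.hasFDerivAt
  have key : ∀ (m : Fin n) (w : Fin n → ℝ),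
      pd m (fun x => fderiv ℝ f x w) q = fderiv ℝ (fderiv ℝ f) q (Pi.single m 1) w := by
    intro m w
    have h1 : HasFDerivAt (fun x => fderiv ℝ f x w)
        ((fderiv ℝ (fderiv ℝ f) q).flip w) q := by
      simpa using hd.hasFDerivAt.clm_apply (hasFDerivAt_const w q)
    rw [pd_of_hasFDerivAt m h1]; rfl
  have e1 : pd j (fun x => pd k f x) q = pd j (fun x => fderiv ℝ f x (Pi.single k 1)) q := rfl
  have e2 : pd k (fun x => pd j f x) q = pd k (fun x => fderiv ℝ f x (Pi.single j 1)) q := rfl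
  rw [e1, e2, key j (Pi.single k 1), key k (Pi.single j 1)]
  exact hsymm _ _

/-! ### scale-factor helpers -/

noncomputable def aFn (h : Fin n → (Fin n → ℝ) → ℝ) (i d : Fin n) : (Fin n → ℝ) → ℝ :=
  fun x => pd d (h i) x * (h i x)⁻¹

variable {U : Set (Fin n → ℝ)} {h : Fin n → (Fin n → ℝ) → ℝ}

lemma aFn_smooth (hU : IsOpen U) (hpos : ∀ i x, 0 < h i x)
    (hsm : ∀ i, ContDiffOn ℝ (⊤ : ℕ∞) (h i) U) (i d : Fin n) :
    ContDiffOn ℝ (⊤ : ℕ∞) (aFn h i d) U :=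
  (contDiffOn_pd hU (hsm i) d).mul ((hsm i).inv (fun x _ => (hpos i x).ne'))

lemma pd_log_h (hU : IsOpen U) (hpos : ∀ i x, 0 < h i x)
    (hsm : ∀ i, ContDiffOn ℝ (⊤ : ℕ∞) (h i) U) (i d : Fin n) {x : Fin n → ℝ} (hx : x ∈ U) :
    pd d (fun y => Real.log (h i y)) x = aFn h i d x := by
  rw [pd_log (diffAt hU hx (hsm i)) (hpos i x).ne', aFn]; exact mul_comm _ _

lemma pd_log_sq (hU : IsOpen U) (hpos : ∀ i x, 0 < h i x)
    (hsm : ∀ i, ContDiffOn ℝ (⊤ : ℕ∞) (h i) U) (i d : Fin n) {x : Fin n → ℝ} (hx : x ∈ U) :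
    pd d (fun y => Real.log ((h i y) ^ 2)) x = 2 * aFn h i d x := by
  have e : (fun y => Real.log ((h i y) ^ 2)) = fun y => (2 : ℝ) * Real.log (h i y) := by
    funext y; rw [Real.log_pow]; push_cast; ring
  rw [e, pd_const_mul ((diffAt hU hx (hsm i)).log (hpos i x).ne'),
    pd_log_h hU hpos hsm i d hx]

lemma pd_log_cube (hU : IsOpen U) (hpos : ∀ i x, 0 < h i x)
    (hsm : ∀ i, ContDiffOn ℝ (⊤ : ℕ∞) (h i) U) (i d : Fin n) {x : Fin n → ℝ} (hx : x ∈ U) :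
    pd d (fun y => Real.log ((h i y) ^ 3)) x = 3 * aFn h i d x := by
  have e : (fun y => Real.log ((h i y) ^ 3)) = fun y => (3 : ℝ) * Real.log (h i y) := by
    funext y; rw [Real.log_pow]; push_cast; ring
  rw [e, pd_const_mul ((diffAt hU hx (hsm i)).log (hpos i x).ne'),
    pd_log_h hU hpos hsm i d hx]

lemma pd_log_prod (hU : IsOpen U) (hpos : ∀ i x, 0 < h i x)
    (hsm : ∀ i, ContDiffOn ℝ (⊤ : ℕ∞) (h i) U) (d : Fin n) {x : Fin n → ℝ} (hx : x ∈ U) :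
    pd d (fun y => Real.log (∏ i, h i y)) x = ∑ i, aFn h i d x := by
  have e : (fun y => Real.log (∏ i, h i y)) = fun y => ∑ i, Real.log (h i y) := by
    funext y; exact Real.log_prod (fun i _ => (hpos i y).ne')
  rw [e, pd_sum Finset.univ _ (fun i _ => (diffAt hU hx (hsm i)).log (hpos i x).ne')]
  exact Finset.sum_congr rfl fun i _ => pd_log_h hU hpos hsm i d hx

lemma pd_log_mix (hU : IsOpen U) (hpos : ∀ i x, 0 < h i x)
    (hsm : ∀ i, ContDiffOn ℝ (⊤ : ℕ∞) (h i) U) (d m : Fin n) {x : Fin n → ℝ} (hx : x ∈ U) :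
    pd d (fun y => Real.log ((∏ i, h i y) * (h m y) ^ 2)) x
      = (∑ i, aFn h i d x) + 2 * aFn h m d x := by
  have e : (fun y => Real.log ((∏ i, h i y) * (h m y) ^ 2))
      = fun y => (∑ i, Real.log (h i y)) + (2 : ℝ) * Real.log (h m y) := by
    funext y
    rw [Real.log_mul (Finset.prod_pos (fun i _ => hpos i y)).ne'
      (pow_ne_zero 2 (hpos m y).ne'), Real.log_prod (fun i _ => (hpos i y).ne'),
      Real.log_pow]
    push_cast; ring
  have d1 : DifferentiableAt ℝ (fun y => ∑ i, Real.log (h i y)) x :=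
    DifferentiableAt.fun_sum fun i _ => (diffAt hU hx (hsm i)).log (hpos i x).ne'
  have d2 : DifferentiableAt ℝ (fun y => (2 : ℝ) * Real.log (h m y)) x :=
    ((diffAt hU hx (hsm m)).log (hpos m x).ne').const_mul _
  rw [e, pd_add d1 d2,
    pd_sum Finset.univ _ (fun i _ => (diffAt hU hx (hsm i)).log (hpos i x).ne'),
    pd_const_mul ((diffAt hU hx (hsm m)).log (hpos m x).ne'),
    pd_log_h hU hpos hsm m d hx]
  congr 1
  exact Finset.sum_congr rfl fun i _ => pd_log_h hU hpos hsm i d hx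

lemma pd_inv_sq (hU : IsOpen U) (hpos : ∀ i x, 0 < h i x)
    (hsm : ∀ i, ContDiffOn ℝ (⊤ : ℕ∞) (h i) U) (i d : Fin n) {x : Fin n → ℝ} (hx : x ∈ U) :
    pd d (fun y => ((h i y) ^ 2)⁻¹) x = (-2) * (((h i x) ^ 3)⁻¹ * pd d (h i) x) := by
  have e : (fun y => ((h i y) ^ 2)⁻¹) = fun y => (h i y * h i y)⁻¹ := by
    funext y; rw [pow_two]
  have dh := diffAt hU hx (hsm i)
  have hne := (hpos i x).ne'
  rw [e, pd_inv (f := fun y => h i y * h i y) (dh.mul dh) (mul_ne_zero hne hne), pd_mul dh dh]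
  field_simp
  ring

lemma staeckel_pdd (hU : IsOpen U) (hpos : ∀ i x, 0 < h i x)
    (hsm : ∀ i, ContDiffOn ℝ (⊤ : ℕ∞) (h i) U) {j k : Fin n} (i : Fin n)
    {q : Fin n → ℝ} (hq : q ∈ U)
    (hstk : Dst h j k (fun q' => ((h i q') ^ 2)⁻¹) q = 0) :
    pd j (fun x => pd k (h i) x) q
      = 3 * pd j (h i) q * pd k (h i) q * (h i q)⁻¹
        - 2 * aFn h k j q * pd k (h i) q - 2 * aFn h j k q * pd j (h i) q := by
  have dh : ∀ x ∈ U, DifferentiableAt ℝ (h i) x := fun x hx => diffAt hU hx (hsm i)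
  have dph : DifferentiableAt ℝ (fun x => pd k (h i) x) q :=
    diffAt hU hq (contDiffOn_pd hU (hsm i) k)
  have hne : h i q ≠ 0 := (hpos i q).ne'
  unfold Dst at hstk
  rw [pd_log_sq hU hpos hsm k j hq, pd_log_sq hU hpos hsm j k hq,
    pd_inv_sq hU hpos hsm i k hq, pd_inv_sq hU hpos hsm i j hq,
    pd_congr_on hU hq j (fun x hx => pd_inv_sq hU hpos hsm i k (x := x) hx)] at hstk
  -- now expand pd j (fun x => (-2) * (((h i x)^3)⁻¹ * pd k (h i) x)) q
  have dcube : DifferentiableAt ℝ (fun x => (h i x) ^ 3) q := (dh q hq).pow 3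
  have dinv3 : DifferentiableAt ℝ (fun x => ((h i x) ^ 3)⁻¹) q :=
    dcube.inv (pow_ne_zero 3 hne)
  have ecube : (fun x => (h i x) ^ 3) = fun x => h i x * (h i x * h i x) := by
    funext x; ring
  have hpdcube : pd j (fun x => (h i x) ^ 3) q = 3 * (h i q)^2 * pd j (h i) q := by
    rw [ecube, pd_mul (g := fun x => h i x * h i x) (dh q hq) ((dh q hq).mul (dh q hq)), pd_mul (dh q hq) (dh q hq)]
    ring
  rw [pd_const_mul (f := fun x => ((h i x) ^ 3)⁻¹ * pd k (h i) x) (dinv3.mul dph), pd_mul dinv3 dph,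
    pd_inv dcube (pow_ne_zero 3 hne), hpdcube] at hstk
  field_simp at hstk
  have h2 : (-2:ℝ) * (h i q)^11 *
      ((pd j (fun x => pd k (h i) x) q) * (h i q)
        - (3 * pd j (h i) q * pd k (h i) q - 2 * aFn h k j q * pd k (h i) q * (h i q)
            - 2 * aFn h j k q * pd j (h i) q * (h i q))) = 0 := by
    linear_combination (h i q)^11 * hstk
  have h8 : ((-2:ℝ) * (h i q)^11) ≠ 0 := mul_ne_zero (by norm_num) (pow_ne_zero _ hne)
  have h5 := (mul_eq_zero.mp h2).resolve_left h8
  field_simp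
  linear_combination h5

lemma pd_aFn (hU : IsOpen U) (hpos : ∀ i x, 0 < h i x)
    (hsm : ∀ i, ContDiffOn ℝ (⊤ : ℕ∞) (h i) U) {j k : Fin n} (i : Fin n)
    {q : Fin n → ℝ} (hq : q ∈ U)
    (hstk : Dst h j k (fun q' => ((h i q') ^ 2)⁻¹) q = 0) :
    pd k (aFn h i j) q
      = 2 * aFn h i j q * aFn h i k q - 2 * aFn h k j q * aFn h i k q
        - 2 * aFn h j k q * aFn h i j q := by
  have dh : DifferentiableAt ℝ (h i) q := diffAt hU hq (hsm i)
  have dph : DifferentiableAt ℝ (fun x => pd j (h i) x) q :=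
    diffAt hU hq (contDiffOn_pd hU (hsm i) j)
  have hne : h i q ≠ 0 := (hpos i q).ne'
  have e1 : pd k (aFn h i j) q
      = pd j (h i) q * (-((h i q)^2)⁻¹ * pd k (h i) q)
        + (h i q)⁻¹ * pd k (fun x => pd j (h i) x) q := by
    rw [show aFn h i j = fun x => pd j (h i) x * (h i x)⁻¹ from rfl,
      pd_mul (g := fun x => (h i x)⁻¹) dph (dh.inv hne), pd_inv dh hne]
  have e2 : pd k (fun x => pd j (h i) x) q = pd j (fun x => pd k (h i) x) q :=
    (pd_comm hU (hsm i) hq j k).symm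
  rw [e1, e2, staeckel_pdd hU hpos hsm i hq hstk]
  show _ = 2 * (pd j (h i) q * (h i q)⁻¹) * (pd k (h i) q * (h i q)⁻¹)
    - 2 * aFn h k j q * (pd k (h i) q * (h i q)⁻¹)
    - 2 * aFn h j k q * (pd j (h i) q * (h i q)⁻¹)
  field_simp
  ring

lemma pd_G (hU : IsOpen U) {q : Fin n → ℝ} (hq : q ∈ U)
    (B S Pk Ph : (Fin n → ℝ) → ℝ) (W A : Fin n → (Fin n → ℝ) → ℝ) (j k : Fin n)
    (hB : ContDiffOn ℝ (⊤ : ℕ∞) B U) (hS : ContDiffOn ℝ (⊤ : ℕ∞) S U) (hPk : ContDiffOn ℝ (⊤ : ℕ∞) Pk U)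
    (hPh : ContDiffOn ℝ (⊤ : ℕ∞) Ph U) (hW : ∀ i, ContDiffOn ℝ (⊤ : ℕ∞) (W i) U)
    (hA : ∀ i, ContDiffOn ℝ (⊤ : ℕ∞) (A i) U) :
    pd k (fun x => pd j B x + B x * S x - (∑ i, W i x * A i x) + Pk x * pd j Ph x) q
      = pd k (fun x => pd j B x) q + (B q * pd k S q + S q * pd k B q)
        - (∑ i, (W i q * pd k (A i) q + A i q * pd k (W i) q))
        + (Pk q * pd k (fun x => pd j Ph x) q + pd j Ph q * pd k Pk q) := by
  have dB := diffAt hU hq hB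
  have dS := diffAt hU hq hS
  have dPk := diffAt hU hq hPk
  have dpB : DifferentiableAt ℝ (fun x => pd j B x) q :=
    diffAt hU hq (contDiffOn_pd hU hB j)
  have dpPh : DifferentiableAt ℝ (fun x => pd j Ph x) q :=
    diffAt hU hq (contDiffOn_pd hU hPh j)
  have dW : ∀ i, DifferentiableAt ℝ (W i) q := fun i => diffAt hU hq (hW i)
  have dA : ∀ i, DifferentiableAt ℝ (A i) q := fun i => diffAt hU hq (hA i)
  have dsum : DifferentiableAt ℝ (fun x => ∑ i, W i x * A i x) q :=
    DifferentiableAt.fun_sum (fun i _ => (dW i).mul (dA i))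
  have d12 : DifferentiableAt ℝ (fun x => pd j B x + B x * S x) q := dpB.add (g := fun x => B x * S x) (dB.mul dS)
  have d123 : DifferentiableAt ℝ (fun x => pd j B x + B x * S x - ∑ i, W i x * A i x) q :=
    d12.sub (g := fun x => ∑ i, W i x * A i x) dsum
  rw [pd_add d123 (g := fun x => Pk x * pd j Ph x) (dPk.mul dpPh), pd_sub d12 dsum,
    pd_add dpB (g := fun x => B x * S x) (dB.mul dS),
    pd_mul dB dS, pd_mul dPk dpPh,
    pd_sum Finset.univ (fun i x => W i x * A i x) (fun i _ => (dW i).mul (dA i)),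
    Finset.sum_congr rfl (fun i _ => pd_mul (dW i) (dA i))]

lemma split_sum (k : Fin n) (F G : Fin n → ℝ) (hFG : ∀ i, i ≠ k → F i = G i) :
    ∑ i, F i = (∑ i, G i) + (F k - G k) := by
  have h1 : ∑ i, (F i - G i) = F k - G k :=
    Finset.sum_eq_single_of_mem k (Finset.mem_univ k)
      (fun b _ hb => by rw [hFG b hb, sub_self])
  have h2 : ∑ i, (F i - G i) = ∑ i, F i - ∑ i, G i := Finset.sum_sub_distrib _ _
  linarith

lemma expandH (Sb Pk ak bj : ℝ) (wk av bv sv IN : Fin n → ℝ) :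
    ∑ i, (wk i * (2 * av i * bv i - 2 * ak * bv i - 2 * bj * av i)
        + av i * (-(wk i) * (Sb + 2 * bv i) + IN i - sv i * Pk))
      = (∑ i, IN i * av i) - Sb * (∑ i, wk i * av i) - Pk * (∑ i, sv i * av i)
        - 2 * ak * (∑ i, wk i * bv i) - 2 * bj * (∑ i, wk i * av i) := by
  have e : ∀ i ∈ Finset.univ,
      wk i * (2 * av i * bv i - 2 * ak * bv i - 2 * bj * av i)
        + av i * (-(wk i) * (Sb + 2 * bv i) + IN i - sv i * Pk)
      = IN i * av i - Sb * (wk i * av i) - Pk * (sv i * av i)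
          - 2 * ak * (wk i * bv i) - 2 * bj * (wk i * av i) := fun i _ => by ring
  rw [Finset.sum_congr rfl e, Finset.sum_sub_distrib, Finset.sum_sub_distrib,
    Finset.sum_sub_distrib, Finset.sum_sub_distrib, ← Finset.mul_sum, ← Finset.mul_sum,
    ← Finset.mul_sum, ← Finset.mul_sum]

lemma sum_swap_eq (w : Fin n → Fin n → ℝ) (hw : ∀ i m, w i m = w m i) (a b : Fin n → ℝ) :
    ∑ i, (∑ m, w m i * b m) * a i = ∑ i, (∑ m, w m i * a m) * b i := by
  have e1 : ∑ i, (∑ m, w m i * b m) * a i = ∑ i, ∑ m, w m i * b m * a i :=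
    Finset.sum_congr rfl fun i _ => Finset.sum_mul _ _ _
  have e2 : ∑ i, (∑ m, w m i * a m) * b i = ∑ i, ∑ m, w m i * a m * b i :=
    Finset.sum_congr rfl fun i _ => Finset.sum_mul _ _ _
  rw [e1, e2, Finset.sum_comm]
  exact Finset.sum_congr rfl fun x _ => Finset.sum_congr rfl fun y _ => by
    rw [hw x y]; ring

end StkAux

open StkAux

/-- Theorem 3 of the paper: under the Jeans equations, if moreover
the Stäckel condition `𝒟_{jk}(hᵢ⁻²) = 0` holds for all `i` and `j ≠ k` and the
diagonal second moments are pairwise distinct pointwise, then `𝒟_{jk}(Φ) = 0` for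
all `j ≠ k`, i.e. the potential is separable in the given Stäckel coordinates. -/
theorem potential_separable_of_jeans_and_staeckel {n : ℕ}
    (U : Set (Fin n → ℝ)) (hU : IsOpen U)
    (h : Fin n → (Fin n → ℝ) → ℝ) (hpos : ∀ i q, 0 < h i q)
    (hsm : ∀ i, ContDiffOn ℝ (⊤ : ℕ∞) (h i) U)
    (ρ : (Fin n → ℝ) → ℝ) (hρpos : ∀ q, 0 < ρ q) (hρ : ContDiffOn ℝ (⊤ : ℕ∞) ρ U)
    (Φ : (Fin n → ℝ) → ℝ) (hΦ : ContDiffOn ℝ (⊤ : ℕ∞) Φ U)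
    (σ2 v4 : Fin n → (Fin n → ℝ) → ℝ)
    (v22 : Fin n → Fin n → (Fin n → ℝ) → ℝ)
    (hσ2 : ∀ i, ContDiffOn ℝ (⊤ : ℕ∞) (σ2 i) U)
    (hv4 : ∀ i, ContDiffOn ℝ (⊤ : ℕ∞) (v4 i) U)
    (hv22 : ∀ i j, ContDiffOn ℝ (⊤ : ℕ∞) (v22 i j) U)
    (hsymm : ∀ i j q, v22 i j q = v22 j i q)
    (hdiag : ∀ j q, v22 j j q = v4 j q)
    (jeans2 : ∀ (j : Fin n), ∀ q ∈ U,
      pd j (fun q' => ρ q' * σ2 j q') q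
        + ρ q * σ2 j q * pd j (fun q' => Real.log (∏ i, h i q')) q
        - (∑ i, ρ q * σ2 i q * pd j (fun q' => Real.log (h i q')) q)
        + ρ q * pd j Φ q = 0)
    (jeans4diag : ∀ (j : Fin n), ∀ q ∈ U,
      pd j (fun q' => ρ q' * v4 j q') q
        + ρ q * v4 j q *
          pd j (fun q' => Real.log ((∏ i, h i q') * (h j q') ^ 2)) q
        - (∑ i, ρ q * v22 i j q * pd j (fun q' => Real.log ((h i q') ^ 3)) q)
        + 3 * ρ q * σ2 j q * pd j Φ q = 0)
    (jeans4mixed : ∀ (j k : Fin n), j ≠ k → ∀ q ∈ U,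
      pd j (fun q' => ρ q' * v22 j k q') q
        + ρ q * v22 j k q *
          pd j (fun q' => Real.log ((∏ i, h i q') * (h k q') ^ 2)) q
        - (∑ i, ρ q * v22 i k q * pd j (fun q' => Real.log (h i q')) q)
        + ρ q * σ2 k q * pd j Φ q = 0)

    (hstk : ∀ (i j k : Fin n), j ≠ k → ∀ q ∈ U,
      Dst h j k (fun q' => ((h i q') ^ 2)⁻¹) q = 0)
    (hdist : ∀ (j k : Fin n), j ≠ k → ∀ q ∈ U, σ2 j q ≠ σ2 k q) :
    ∀ (j k : Fin n), j ≠ k → ∀ q ∈ U, Dst h j k Φ q = 0 := by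
  intro j k hjk q hq
  classical
  -- normalized 2nd-order Jeans equations
  have NA : ∀ d : Fin n, ∀ x ∈ U,
      pd d (fun q' => ρ q' * σ2 d q') x
        + ρ x * σ2 d x * (∑ i, aFn h i d x)
        - (∑ i, ρ x * σ2 i x * aFn h i d x)
        + ρ x * pd d Φ x = 0 := by
    intro d x hx
    have e := jeans2 d x hx
    rw [pd_log_prod hU hpos hsm d hx] at e
    have e2 : (∑ i, ρ x * σ2 i x * pd d (fun q' => Real.log (h i q')) x)
        = ∑ i, ρ x * σ2 i x * aFn h i d x :=
      Finset.sum_congr rfl fun i _ => by rw [pd_log_h hU hpos hsm i d hx]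
    rw [e2] at e
    exact e
  -- normalized mixed 4th-order Jeans equations
  have NB : ∀ d e' : Fin n, d ≠ e' → ∀ x ∈ U,
      pd d (fun q' => ρ q' * v22 d e' q') x
        + ρ x * v22 d e' x * ((∑ i, aFn h i d x) + 2 * aFn h e' d x)
        - (∑ i, ρ x * v22 i e' x * aFn h i d x)
        + ρ x * σ2 e' x * pd d Φ x = 0 := by
    intro d e' hde x hx
    have e := jeans4mixed d e' hde x hx
    rw [pd_log_mix hU hpos hsm d e' hx] at e
    have e2 : (∑ i, ρ x * v22 i e' x * pd d (fun q' => Real.log (h i q')) x)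
        = ∑ i, ρ x * v22 i e' x * aFn h i d x :=
      Finset.sum_congr rfl fun i _ => by rw [pd_log_h hU hpos hsm i d hx]
    rw [e2] at e
    exact e
  -- normalized diagonal 4th-order Jeans equations
  have NC : ∀ d : Fin n, ∀ x ∈ U,
      pd d (fun q' => ρ q' * v22 d d q') x
        + ρ x * v22 d d x * ((∑ i, aFn h i d x) + 2 * aFn h d d x)
        - 3 * (∑ i, ρ x * v22 i d x * aFn h i d x)
        + 3 * ρ x * σ2 d x * pd d Φ x = 0 := by
    intro d x hx
    have e := jeans4diag d x hx
    rw [show (fun q' => ρ q' * v4 d q') = fun q' => ρ q' * v22 d d q'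
        from funext fun y => by rw [hdiag d y]] at e
    rw [← hdiag d x] at e
    rw [pd_log_mix hU hpos hsm d d hx] at e
    have e2 : (∑ i, ρ x * v22 i d x * pd d (fun q' => Real.log ((h i q') ^ 3)) x)
        = ∑ i, 3 * (ρ x * v22 i d x * aFn h i d x) :=
      Finset.sum_congr rfl fun i _ => by rw [pd_log_cube hU hpos hsm i d hx]; ring
    rw [e2, ← Finset.mul_sum] at e
    exact e
  -- smoothness package
  have smQ : ∀ i m : Fin n, ContDiffOn ℝ (⊤ : ℕ∞) (fun x => ρ x * v22 i m x) U :=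
    fun i m => hρ.mul (hv22 i m)
  have smP : ∀ i : Fin n, ContDiffOn ℝ (⊤ : ℕ∞) (fun x => ρ x * σ2 i x) U :=
    fun i => hρ.mul (hσ2 i)
  have smA : ∀ i d : Fin n, ContDiffOn ℝ (⊤ : ℕ∞) (aFn h i d) U :=
    fun i d => aFn_smooth hU hpos hsm i d
  have smSj : ContDiffOn ℝ (⊤ : ℕ∞) (fun x => (∑ i, aFn h i j x) + 2 * aFn h k j x) U :=
    (ContDiffOn.sum fun i _ => smA i j).add (contDiffOn_const.mul (smA k j))
  have smSk : ContDiffOn ℝ (⊤ : ℕ∞) (fun x => (∑ i, aFn h i k x) + 2 * aFn h j k x) U :=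
    (ContDiffOn.sum fun i _ => smA i k).add (contDiffOn_const.mul (smA j k))
  -- scalar substitution identities at q
  have subCSk : pd k (fun x => ρ x * σ2 k x) q
      = -(ρ q * σ2 k q) * (∑ m, aFn h m k q)
        + (∑ m, ρ q * σ2 m q * aFn h m k q) - ρ q * pd k Φ q := by
    linear_combination NA k q hq
  have subCSj : pd j (fun x => ρ x * σ2 j x) q
      = -(ρ q * σ2 j q) * (∑ m, aFn h m j q)
        + (∑ m, ρ q * σ2 m q * aFn h m j q) - ρ q * pd j Φ q := by
    linear_combination NA j q hq
  have subCBjk : pd j (fun x => ρ x * v22 j k x) q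
      = -(ρ q * v22 j k q) * ((∑ m, aFn h m j q) + 2 * aFn h k j q)
        + (∑ m, ρ q * v22 m k q * aFn h m j q) - ρ q * σ2 k q * pd j Φ q := by
    linear_combination NB j k hjk q hq
  have subCBkj : pd k (fun x => ρ x * v22 j k x) q
      = -(ρ q * v22 j k q) * ((∑ m, aFn h m k q) + 2 * aFn h j k q)
        + (∑ m, ρ q * v22 m j q * aFn h m k q) - ρ q * σ2 j q * pd k Φ q := by
    have e := NB k j hjk.symm q hq
    rw [show (fun q' => ρ q' * v22 k j q') = fun q' => ρ q' * v22 j k q'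
        from funext fun y => by rw [hsymm k j y]] at e
    rw [hsymm k j q] at e
    linear_combination e
  have subCK : ∀ i : Fin n, i ≠ k → pd k (fun x => ρ x * v22 i k x) q
      = -(ρ q * v22 i k q) * ((∑ m, aFn h m k q) + 2 * aFn h i k q)
        + (∑ m, ρ q * v22 m i q * aFn h m k q) - ρ q * σ2 i q * pd k Φ q := by
    intro i hik
    have e := NB k i hik.symm q hq
    rw [show (fun q' => ρ q' * v22 k i q') = fun q' => ρ q' * v22 i k q'
        from funext fun y => by rw [hsymm k i y]] at e
    rw [hsymm k i q] at e
    linear_combination e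
  have subCJ : ∀ i : Fin n, i ≠ j → pd j (fun x => ρ x * v22 i j x) q
      = -(ρ q * v22 i j q) * ((∑ m, aFn h m j q) + 2 * aFn h i j q)
        + (∑ m, ρ q * v22 m i q * aFn h m j q) - ρ q * σ2 i q * pd j Φ q := by
    intro i hij
    have e := NB j i hij.symm q hq
    rw [show (fun q' => ρ q' * v22 j i q') = fun q' => ρ q' * v22 i j q'
        from funext fun y => by rw [hsymm j i y]] at e
    rw [hsymm j i q] at e
    linear_combination e
  have subCKk : pd k (fun x => ρ x * v22 k k x) q
      = -(ρ q * v22 k k q) * ((∑ m, aFn h m k q) + 2 * aFn h k k q)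
        + 3 * (∑ m, ρ q * v22 m k q * aFn h m k q) - 3 * (ρ q * σ2 k q) * pd k Φ q := by
    linear_combination NC k q hq
  have subCJj : pd j (fun x => ρ x * v22 j j x) q
      = -(ρ q * v22 j j q) * ((∑ m, aFn h m j q) + 2 * aFn h j j q)
        + 3 * (∑ m, ρ q * v22 m j q * aFn h m j q) - 3 * (ρ q * σ2 j q) * pd j Φ q := by
    linear_combination NC j q hq
  -- derivative of aFn sums
  have hpdSj : pd k (fun x => (∑ i, aFn h i j x) + 2 * aFn h k j x) q
      = (∑ i, (2 * aFn h i j q * aFn h i k q - 2 * aFn h k j q * aFn h i k q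
          - 2 * aFn h j k q * aFn h i j q))
        + 2 * (2 * aFn h k j q * aFn h k k q - 2 * aFn h k j q * aFn h k k q
          - 2 * aFn h j k q * aFn h k j q) := by
    have dsum : DifferentiableAt ℝ (fun x => ∑ i, aFn h i j x) q :=
      DifferentiableAt.fun_sum fun i _ => diffAt hU hq (smA i j)
    rw [pd_add dsum ((diffAt hU hq (smA k j)).const_mul 2),
      pd_const_mul (diffAt hU hq (smA k j)) 2,
      pd_sum Finset.univ _ (fun i _ => diffAt hU hq (smA i j)),
      pd_aFn hU hpos hsm k hq (hstk k j k hjk q hq),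
      Finset.sum_congr rfl (fun i _ => pd_aFn hU hpos hsm i hq (hstk i j k hjk q hq))]
  have hpdSk : pd j (fun x => (∑ i, aFn h i k x) + 2 * aFn h j k x) q
      = (∑ i, (2 * aFn h i k q * aFn h i j q - 2 * aFn h j k q * aFn h i j q
          - 2 * aFn h k j q * aFn h i k q))
        + 2 * (2 * aFn h j k q * aFn h j j q - 2 * aFn h j k q * aFn h j j q
          - 2 * aFn h k j q * aFn h j k q) := by
    have dsum : DifferentiableAt ℝ (fun x => ∑ i, aFn h i k x) q :=
      DifferentiableAt.fun_sum fun i _ => diffAt hU hq (smA i k)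
    rw [pd_add dsum ((diffAt hU hq (smA j k)).const_mul 2),
      pd_const_mul (diffAt hU hq (smA j k)) 2,
      pd_sum Finset.univ _ (fun i _ => diffAt hU hq (smA i k)),
      pd_aFn hU hpos hsm j hq (hstk j k j hjk.symm q hq),
      Finset.sum_congr rfl (fun i _ => pd_aFn hU hpos hsm i hq (hstk i k j hjk.symm q hq))]
  -- the differentiated mixed Jeans equation, direction (j,k)
  have E1 := pd_G hU hq (fun x => ρ x * v22 j k x)
      (fun x => (∑ i, aFn h i j x) + 2 * aFn h k j x)
      (fun x => ρ x * σ2 k x) Φ (fun i x => ρ x * v22 i k x) (fun i => aFn h i j) j k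
      (smQ j k) smSj (smP k) hΦ (fun i => smQ i k) (fun i => smA i j)
  have E0 : pd k (fun x => pd j (fun q' => ρ q' * v22 j k q') x
      + ρ x * v22 j k x * ((∑ i, aFn h i j x) + 2 * aFn h k j x)
      - (∑ i, ρ x * v22 i k x * aFn h i j x)
      + ρ x * σ2 k x * pd j Φ x) q = 0 := by
    rw [pd_congr_on (g := fun _ => (0:ℝ)) hU hq k (fun x hx => NB j k hjk x hx), pd_const]
  rw [E1] at E0
  rw [hpdSj, subCBkj, subCSk] at E0
  have hsum1 : (∑ i, (ρ q * v22 i k q * pd k (aFn h i j) q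
        + aFn h i j q * pd k (fun x => ρ x * v22 i k x) q))
      = ∑ i, (ρ q * v22 i k q * (2 * aFn h i j q * aFn h i k q
            - 2 * aFn h k j q * aFn h i k q - 2 * aFn h j k q * aFn h i j q)
          + aFn h i j q * pd k (fun x => ρ x * v22 i k x) q) :=
    Finset.sum_congr rfl fun i _ => by
      rw [pd_aFn hU hpos hsm i hq (hstk i j k hjk q hq)]
  rw [hsum1] at E0
  have hsplitK := split_sum k
    (fun i => ρ q * v22 i k q * (2 * aFn h i j q * aFn h i k q
        - 2 * aFn h k j q * aFn h i k q - 2 * aFn h j k q * aFn h i j q)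
      + aFn h i j q * pd k (fun x => ρ x * v22 i k x) q)
    (fun i => ρ q * v22 i k q * (2 * aFn h i j q * aFn h i k q
        - 2 * aFn h k j q * aFn h i k q - 2 * aFn h j k q * aFn h i j q)
      + aFn h i j q * (-(ρ q * v22 i k q) * ((∑ m, aFn h m k q) + 2 * aFn h i k q)
        + (∑ m, ρ q * v22 m i q * aFn h m k q) - ρ q * σ2 i q * pd k Φ q))
    (fun i hik => by rw [subCK i hik])
  rw [hsplitK, subCKk] at E0
  have hexpK := expandH (n := n) (∑ m, aFn h m k q) (pd k Φ q) (aFn h k j q) (aFn h j k q)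
    (fun i => ρ q * v22 i k q) (fun i => aFn h i j q) (fun i => aFn h i k q)
    (fun i => ρ q * σ2 i q) (fun i => ∑ m, ρ q * v22 m i q * aFn h m k q)
  rw [hexpK] at E0
  -- the differentiated mixed Jeans equation, direction (k,j)
  have E2 := pd_G hU hq (fun x => ρ x * v22 k j x)
      (fun x => (∑ i, aFn h i k x) + 2 * aFn h j k x)
      (fun x => ρ x * σ2 j x) Φ (fun i x => ρ x * v22 i j x) (fun i => aFn h i k) k j
      (smQ k j) smSk (smP j) hΦ (fun i => smQ i j) (fun i => smA i k)
  have E0' : pd j (fun x => pd k (fun q' => ρ q' * v22 k j q') x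
      + ρ x * v22 k j x * ((∑ i, aFn h i k x) + 2 * aFn h j k x)
      - (∑ i, ρ x * v22 i j x * aFn h i k x)
      + ρ x * σ2 j x * pd k Φ x) q = 0 := by
    rw [pd_congr_on (g := fun _ => (0:ℝ)) hU hq j (fun x hx => NB k j hjk.symm x hx), pd_const]
  rw [E2] at E0'
  rw [show (fun x => ρ x * v22 k j x) = fun x => ρ x * v22 j k x
      from funext fun y => by rw [hsymm k j y]] at E0'
  rw [hsymm k j q] at E0'
  rw [pd_comm hU (smQ j k) hq j k, pd_comm hU hΦ hq j k] at E0'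
  rw [hpdSk, subCBjk, subCSj] at E0'
  have hMsum : (∑ i, (2 * aFn h i k q * aFn h i j q - 2 * aFn h j k q * aFn h i j q
        - 2 * aFn h k j q * aFn h i k q))
      = ∑ i, (2 * aFn h i j q * aFn h i k q - 2 * aFn h k j q * aFn h i k q
        - 2 * aFn h j k q * aFn h i j q) :=
    Finset.sum_congr rfl fun i _ => by ring
  rw [hMsum] at E0'
  have hsum1' : (∑ i, (ρ q * v22 i j q * pd j (aFn h i k) q
        + aFn h i k q * pd j (fun x => ρ x * v22 i j x) q))
      = ∑ i, (ρ q * v22 i j q * (2 * aFn h i k q * aFn h i j q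
            - 2 * aFn h j k q * aFn h i j q - 2 * aFn h k j q * aFn h i k q)
          + aFn h i k q * pd j (fun x => ρ x * v22 i j x) q) :=
    Finset.sum_congr rfl fun i _ => by
      rw [pd_aFn hU hpos hsm i hq (hstk i k j hjk.symm q hq)]
  rw [hsum1'] at E0'
  have hsplitJ := split_sum j
    (fun i => ρ q * v22 i j q * (2 * aFn h i k q * aFn h i j q
        - 2 * aFn h j k q * aFn h i j q - 2 * aFn h k j q * aFn h i k q)
      + aFn h i k q * pd j (fun x => ρ x * v22 i j x) q)
    (fun i => ρ q * v22 i j q * (2 * aFn h i k q * aFn h i j q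
        - 2 * aFn h j k q * aFn h i j q - 2 * aFn h k j q * aFn h i k q)
      + aFn h i k q * (-(ρ q * v22 i j q) * ((∑ m, aFn h m j q) + 2 * aFn h i j q)
        + (∑ m, ρ q * v22 m i q * aFn h m j q) - ρ q * σ2 i q * pd j Φ q))
    (fun i hij => by rw [subCJ i hij])
  rw [hsplitJ, subCJj] at E0'
  have hexpJ := expandH (n := n) (∑ m, aFn h m j q) (pd j Φ q) (aFn h j k q) (aFn h k j q)
    (fun i => ρ q * v22 i j q) (fun i => aFn h i k q) (fun i => aFn h i j q)
    (fun i => ρ q * σ2 i q) (fun i => ∑ m, ρ q * v22 m i q * aFn h m j q)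
  rw [hexpJ] at E0'
  -- double-sum symmetry
  have hDS := sum_swap_eq (fun m i => ρ q * v22 m i q)
    (fun i m => by rw [hsymm i m q]) (fun i => aFn h i j q) (fun i => aFn h i k q)
  -- the key identity
  have KEY : ρ q * (σ2 k q - σ2 j q) * (pd k (fun x => pd j Φ x) q
      + 2 * aFn h k j q * pd k Φ q + 2 * aFn h j k q * pd j Φ q) = 0 := by
    linear_combination E0 - E0' + hDS
  -- conclude
  have hDst : Dst h j k Φ q = pd k (fun x => pd j Φ x) q
      + 2 * aFn h k j q * pd k Φ q + 2 * aFn h j k q * pd j Φ q := by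
    unfold Dst
    rw [pd_log_sq hU hpos hsm k j hq, pd_log_sq hU hpos hsm j k hq,
      pd_comm hU hΦ hq j k]
  rw [hDst]
  have h1 : ρ q * (σ2 k q - σ2 j q) ≠ 0 :=
    mul_ne_zero (hρpos q).ne' (sub_ne_zero.mpr (hdist k j hjk.symm q hq))
  exact (mul_eq_zero.mp KEY).resolve_left h1
end
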